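/- arXiv:2302.11905 — 2 statements merged into one kernel-verified Lean document; each statement's English description precedes it below -/
import Mathlib

section
/- Let ℓ : Δ² → [0,∞)² be an admissible (ℓ ∈ 𝓛) proper binary loss function. Then ℓ is mixable if and only if liminf_{t → 0⁺} κ⁺_ℓ(t)/κ⁺_log(t) > 0 and liminf_{t → 1⁻} κ⁺_ℓ(t)/κ⁺_log(t) > 0. -/
open Real Set Filter

noncomputable section

/-- The probability simplex Δ² ⊆ ℝ². -/
def simplex2 : Set (Fin 2 → ℝ) := {p | (∀ i, 0 ≤ p i) ∧ ∑ i, p i = 1}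

/-- The relative interior of Δ². -/
def relint2 : Set (Fin 2 → ℝ) := {p | (∀ i, 0 < p i) ∧ ∑ i, p i = 1}

/-- Properness of a binary loss. -/
def IsProper2 (ℓ : (Fin 2 → ℝ) → Fin 2 → ℝ) : Prop :=
  ∀ p ∈ simplex2, ∀ q ∈ simplex2, ∑ i, ℓ p i * p i ≤ ∑ i, ℓ q i * p i

/-- Strict properness of a binary loss. -/
def IsStrictlyProper2 (ℓ : (Fin 2 → ℝ) → Fin 2 → ℝ) : Prop :=
  IsProper2 ℓ ∧ ∀ p ∈ simplex2, ∀ q ∈ simplex2, q ≠ p →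
    ∑ i, ℓ p i * p i < ∑ i, ℓ q i * p i

/-- The local expression `ℓ̃ᵢ(t) = ℓᵢ(t, 1−t)` in the standard parametrization. -/
def tl (ℓ : (Fin 2 → ℝ) → Fin 2 → ℝ) (i : Fin 2) : ℝ → ℝ := fun t => ℓ ![t, 1 - t] i

/-- Admissibility (membership in 𝓛): `ℓ̃` is C² on (0,1) and `ℓ̃₁'·ℓ̃₂' < 0` there. -/
def IsAdmissible2 (ℓ : (Fin 2 → ℝ) → Fin 2 → ℝ) : Prop :=
  ContDiffOn ℝ 2 (tl ℓ 0) (Set.Ioo 0 1) ∧ ContDiffOn ℝ 2 (tl ℓ 1) (Set.Ioo 0 1) ∧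
    ∀ t ∈ Set.Ioo (0 : ℝ) 1, deriv (tl ℓ 0) t * deriv (tl ℓ 1) t < 0

/-- Curvature of the loss curve with respect to the unit normal pointing towards the
positive quadrant:
`κ⁺_ℓ(t) = sgn(ℓ̃₁')·(ℓ̃₁'ℓ̃₂'' − ℓ̃₁''ℓ̃₂')/(ℓ̃₁'² + ℓ̃₂'²)^{3/2}`. -/
def kplus (ℓ : (Fin 2 → ℝ) → Fin 2 → ℝ) (t : ℝ) : ℝ :=
  Real.sign (deriv (tl ℓ 0) t) *
    (deriv (tl ℓ 0) t * deriv (deriv (tl ℓ 1)) t -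
      deriv (deriv (tl ℓ 0)) t * deriv (tl ℓ 1) t) /
    ((deriv (tl ℓ 0) t) ^ 2 + (deriv (tl ℓ 1) t) ^ 2) ^ ((3 : ℝ) / 2)

/-- Curvature of the log loss curve: `κ⁺_log(t) = t(1−t)/(t² + (1−t)²)^{3/2}`. -/
def klog (t : ℝ) : ℝ := t * (1 - t) / (t ^ 2 + (1 - t) ^ 2) ^ ((3 : ℝ) / 2)

/-- Superprediction set of a binary loss. -/
def spr2 (ℓ : (Fin 2 → ℝ) → Fin 2 → ℝ) : Set (Fin 2 → ℝ) :=
  {x | (∀ i, 0 ≤ x i) ∧ ∃ q ∈ simplex2, ∀ i, ℓ q i ≤ x i}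

/-- The η-exponential projection on ℝ². -/
def Eproj2 (η : ℝ) (y : Fin 2 → ℝ) : Fin 2 → ℝ := fun i => Real.exp (-η * y i)

/-- η-mixability of a binary loss. -/
def IsMixable2 (η : ℝ) (ℓ : (Fin 2 → ℝ) → Fin 2 → ℝ) : Prop :=
  Convex ℝ (Eproj2 η '' spr2 ℓ)

namespace Mix15
set_option linter.unusedSectionVars false

variable (ℓ : (Fin 2 → ℝ) → Fin 2 → ℝ)

/-- the weight function w(t) = ℓ̃₂'(t)/t -/
def wfn : ℝ → ℝ := fun t => deriv (tl ℓ 1) t / t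

lemma mem_simplex_pt {t : ℝ} (h0 : 0 ≤ t) (h1 : t ≤ 1) : ![t, 1 - t] ∈ simplex2 := by
  constructor
  · intro i; fin_cases i <;> simp [h0, h1]
  · simp [Fin.sum_univ_two]

lemma simplex_eq {q : Fin 2 → ℝ} (hq : q ∈ simplex2) :
    q = ![q 0, 1 - q 0] ∧ 0 ≤ q 0 ∧ q 0 ≤ 1 := by
  obtain ⟨hpos, hsum⟩ := hq
  rw [Fin.sum_univ_two] at hsum
  refine ⟨?_, hpos 0, ?_⟩
  · funext i; fin_cases i
    · simp
    · simp; linarith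
  · have := hpos 1; linarith

lemma v1_mem : (![1,0] : Fin 2 → ℝ) ∈ simplex2 := by
  refine ⟨?_, by simp [Fin.sum_univ_two]⟩
  intro i; fin_cases i <;> norm_num

lemma v0_mem : (![0,1] : Fin 2 → ℝ) ∈ simplex2 := by
  refine ⟨?_, by simp [Fin.sum_univ_two]⟩
  intro i; fin_cases i <;> norm_num

/-- helper: x ≤ 1 + ε for every ε > 0 implies x ≤ 1 -/
lemma le_one_of_forall (x : ℝ) (h : ∀ ε : ℝ, 0 < ε → x ≤ 1 + ε) : x ≤ 1 := by
  by_contra hx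
  push_neg at hx
  have := h ((x - 1)/2) (by linarith)
  linarith

section Main

variable (hrange : ∀ p ∈ simplex2, ∀ i, 0 ≤ ℓ p i)
  (hadm : IsAdmissible2 ℓ) (hprop : IsProper2 ℓ)

include hrange hadm hprop

lemma prop_local : ∀ t ∈ Set.Icc (0:ℝ) 1, ∀ s ∈ Set.Icc (0:ℝ) 1,
    tl ℓ 0 t * t + tl ℓ 1 t * (1 - t) ≤ tl ℓ 0 s * t + tl ℓ 1 s * (1 - t) := by
  intro t ht s hs
  have h := hprop ![t, 1-t] (mem_simplex_pt ht.1 ht.2) ![s, 1-s] (mem_simplex_pt hs.1 hs.2)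
  simp only [Fin.sum_univ_two, Matrix.cons_val_zero, Matrix.cons_val_one, Matrix.head_cons] at h
  simp only [tl, Matrix.cons_val_zero, Matrix.cons_val_one, Matrix.head_cons]
  linarith

lemma hasDeriv_f0 : ∀ t ∈ Set.Ioo (0:ℝ) 1, HasDerivAt (tl ℓ 0) (deriv (tl ℓ 0) t) t := by
  intro t ht
  exact ((hadm.1.differentiableOn (by norm_num)).differentiableAt
    (isOpen_Ioo.mem_nhds ht)).hasDerivAt

lemma hasDeriv_f1 : ∀ t ∈ Set.Ioo (0:ℝ) 1, HasDerivAt (tl ℓ 1) (deriv (tl ℓ 1) t) t := by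
  intro t ht
  exact ((hadm.2.1.differentiableOn (by norm_num)).differentiableAt
    (isOpen_Ioo.mem_nhds ht)).hasDerivAt

lemma contDiffOn_d0 : ContDiffOn ℝ 1 (deriv (tl ℓ 0)) (Set.Ioo 0 1) :=
  hadm.1.deriv_of_isOpen isOpen_Ioo (by norm_num)

lemma contDiffOn_d1 : ContDiffOn ℝ 1 (deriv (tl ℓ 1)) (Set.Ioo 0 1) :=
  hadm.2.1.deriv_of_isOpen isOpen_Ioo (by norm_num)

lemma hasDeriv_d0 : ∀ t ∈ Set.Ioo (0:ℝ) 1,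
    HasDerivAt (deriv (tl ℓ 0)) (deriv (deriv (tl ℓ 0)) t) t := by
  intro t ht
  exact (((contDiffOn_d0 ℓ hrange hadm hprop).differentiableOn one_ne_zero).differentiableAt
    (isOpen_Ioo.mem_nhds ht)).hasDerivAt

lemma hasDeriv_d1 : ∀ t ∈ Set.Ioo (0:ℝ) 1,
    HasDerivAt (deriv (tl ℓ 1)) (deriv (deriv (tl ℓ 1)) t) t := by
  intro t ht
  exact (((contDiffOn_d1 ℓ hrange hadm hprop).differentiableOn one_ne_zero).differentiableAt
    (isOpen_Ioo.mem_nhds ht)).hasDerivAt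

/-- Stationarity: t·ℓ̃₁'(t) + (1−t)·ℓ̃₂'(t) = 0. -/
lemma stat : ∀ t ∈ Set.Ioo (0:ℝ) 1,
    t * deriv (tl ℓ 0) t + (1 - t) * deriv (tl ℓ 1) t = 0 := by
  intro t ht
  have hG : HasDerivAt (fun s => tl ℓ 0 s * t + tl ℓ 1 s * (1 - t))
      (deriv (tl ℓ 0) t * t + deriv (tl ℓ 1) t * (1 - t)) t :=
    ((hasDeriv_f0 ℓ hrange hadm hprop t ht).mul_const t).add
      ((hasDeriv_f1 ℓ hrange hadm hprop t ht).mul_const (1 - t))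
  have hmin : IsLocalMin (fun s => tl ℓ 0 s * t + tl ℓ 1 s * (1 - t)) t := by
    filter_upwards [Icc_mem_nhds ht.1 ht.2] with s hs
    exact prop_local ℓ hrange hadm hprop t (Set.mem_Icc.2 ⟨le_of_lt ht.1, le_of_lt ht.2⟩) s hs
  have h0 := hmin.hasDerivAt_eq_zero hG
  linarith

lemma d1_ne : ∀ t ∈ Set.Ioo (0:ℝ) 1, deriv (tl ℓ 1) t ≠ 0 := by
  intro t ht h0
  have := hadm.2.2 t ht
  rw [h0, mul_zero] at this
  exact lt_irrefl 0 this

lemma d1_pos : ∀ t ∈ Set.Ioo (0:ℝ) 1, 0 < deriv (tl ℓ 1) t := by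
  intro t ht
  rcases lt_or_gt_of_ne (d1_ne ℓ hrange hadm hprop t ht) with hneg | hpos
  · exfalso
    set t₁ : ℝ := (t + 1) / 2 with ht₁def
    have htt₁ : t < t₁ := by rw [ht₁def]; linarith [ht.2]
    have ht₁ : t₁ ∈ Set.Ioo (0:ℝ) 1 := by
      constructor <;> [skip; skip] <;> rw [ht₁def] <;> [linarith [ht.1]; linarith [ht.2]]
    have hsub : Set.Icc t t₁ ⊆ Set.Ioo (0:ℝ) 1 := fun x hx =>
      ⟨lt_of_lt_of_le ht.1 hx.1, lt_of_le_of_lt hx.2 ht₁.2⟩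
    have hcont : ContinuousOn (deriv (tl ℓ 1)) (Set.Icc t t₁) :=
      ((contDiffOn_d1 ℓ hrange hadm hprop).continuousOn).mono hsub
    -- d1 < 0 on all of Icc t t₁
    have hneg' : ∀ s ∈ Set.Icc t t₁, deriv (tl ℓ 1) s < 0 := by
      intro s hs
      rcases lt_or_gt_of_ne (d1_ne ℓ hrange hadm hprop s (hsub hs)) with h | h
      · exact h
      · exfalso
        have hts : t < s := by
          rcases eq_or_lt_of_le hs.1 with rfl | h'
          · exact absurd hneg (not_lt.2 (le_of_lt h))
          · exact h'
        have hiv := intermediate_value_Ioo (le_of_lt hts)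
          (hcont.mono (Set.Icc_subset_Icc le_rfl hs.2))
        have : (0:ℝ) ∈ Set.Ioo (deriv (tl ℓ 1) t) (deriv (tl ℓ 1) s) := ⟨hneg, h⟩
        obtain ⟨z, hz, hz0⟩ := hiv this
        exact d1_ne ℓ hrange hadm hprop z
          (hsub ⟨le_of_lt hz.1, le_of_lt (lt_of_lt_of_le hz.2 hs.2)⟩) hz0
    -- MVT on G
    set G : ℝ → ℝ := fun s => tl ℓ 0 s * t + tl ℓ 1 s * (1 - t) with hGdef
    have hGc : ContinuousOn G (Set.Icc t t₁) := by
      apply ContinuousOn.add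
      · exact (hadm.1.continuousOn.mono hsub).mul continuousOn_const
      · exact (hadm.2.1.continuousOn.mono hsub).mul continuousOn_const
    have hGd : ∀ s ∈ Set.Ioo t t₁, HasDerivAt G (deriv (tl ℓ 1) s * ((s - t)/s)) s := by
      intro s hs
      have hs' : s ∈ Set.Ioo (0:ℝ) 1 := hsub ⟨le_of_lt hs.1, le_of_lt hs.2⟩
      have h := ((hasDeriv_f0 ℓ hrange hadm hprop s hs').mul_const t).add
        ((hasDeriv_f1 ℓ hrange hadm hprop s hs').mul_const (1 - t))
      refine h.congr_deriv (Eq.symm ?_)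
      have hst := stat ℓ hrange hadm hprop s hs'
      have hs0 : s ≠ 0 := ne_of_gt hs'.1
      field_simp
      linear_combination (-t) * hst
    obtain ⟨c, hc, hceq⟩ := exists_hasDerivAt_eq_slope G _ htt₁ hGc hGd
    have hslope : 0 ≤ (G t₁ - G t) / (t₁ - t) := by
      apply div_nonneg _ (by linarith)
      have := prop_local ℓ hrange hadm hprop t
        (Set.mem_Icc.2 ⟨le_of_lt ht.1, le_of_lt ht.2⟩) t₁
        (Set.mem_Icc.2 ⟨le_of_lt ht₁.1, le_of_lt ht₁.2⟩)
      simp only [hGdef]; linarith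
    have hc' : c ∈ Set.Ioo (0:ℝ) 1 := hsub ⟨le_of_lt hc.1, le_of_lt hc.2⟩
    have h1 : deriv (tl ℓ 1) c < 0 := hneg' c ⟨le_of_lt hc.1, le_of_lt hc.2⟩
    have h2 : 0 < (c - t)/c := div_pos (by linarith [hc.1]) hc'.1
    have h3 : deriv (tl ℓ 1) c * ((c - t)/c) < 0 := mul_neg_of_neg_of_pos h1 h2
    rw [hceq] at h3
    linarith
  · exact hpos

lemma w_pos : ∀ t ∈ Set.Ioo (0:ℝ) 1, 0 < wfn ℓ t := by
  intro t ht
  exact div_pos (d1_pos ℓ hrange hadm hprop t ht) ht.1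

lemma d1_eq : ∀ t ∈ Set.Ioo (0:ℝ) 1, deriv (tl ℓ 1) t = t * wfn ℓ t := by
  intro t ht
  have ht0 : t ≠ 0 := ne_of_gt ht.1
  unfold wfn; field_simp

lemma d0_eq : ∀ t ∈ Set.Ioo (0:ℝ) 1, deriv (tl ℓ 0) t = -((1 - t) * wfn ℓ t) := by
  intro t ht
  have h := stat ℓ hrange hadm hprop t ht
  have ht0 : t ≠ 0 := ne_of_gt ht.1
  unfold wfn; field_simp
  nlinarith [h]

lemma d0_neg : ∀ t ∈ Set.Ioo (0:ℝ) 1, deriv (tl ℓ 0) t < 0 := by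
  intro t ht
  rw [d0_eq ℓ hrange hadm hprop t ht]
  have := w_pos ℓ hrange hadm hprop t ht
  nlinarith [ht.1, ht.2]

lemma hasDeriv_w : ∀ t ∈ Set.Ioo (0:ℝ) 1, HasDerivAt (wfn ℓ) (deriv (wfn ℓ) t) t := by
  intro t ht
  have : DifferentiableAt ℝ (wfn ℓ) t := by
    apply DifferentiableAt.div
    · exact (hasDeriv_d1 ℓ hrange hadm hprop t ht).differentiableAt
    · exact differentiableAt_id
    · exact ne_of_gt ht.1
  exact this.hasDerivAt

lemma deriv_d1_eq : ∀ t ∈ Set.Ioo (0:ℝ) 1,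
    deriv (deriv (tl ℓ 1)) t = wfn ℓ t + t * deriv (wfn ℓ) t := by
  intro t ht
  have heq : deriv (tl ℓ 1) =ᶠ[nhds t] (fun s => s * wfn ℓ s) := by
    filter_upwards [isOpen_Ioo.mem_nhds ht] with s hs
    exact d1_eq ℓ hrange hadm hprop s hs
  rw [heq.deriv_eq]
  have h : HasDerivAt (fun s => s * wfn ℓ s) (1 * wfn ℓ t + t * deriv (wfn ℓ) t) t :=
    (hasDerivAt_id t).mul (hasDeriv_w ℓ hrange hadm hprop t ht)
  rw [h.deriv]; ring

lemma deriv_d0_eq : ∀ t ∈ Set.Ioo (0:ℝ) 1,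
    deriv (deriv (tl ℓ 0)) t = wfn ℓ t - (1 - t) * deriv (wfn ℓ) t := by
  intro t ht
  have heq : deriv (tl ℓ 0) =ᶠ[nhds t] (fun s => -((1 - s) * wfn ℓ s)) := by
    filter_upwards [isOpen_Ioo.mem_nhds ht] with s hs
    exact d0_eq ℓ hrange hadm hprop s hs
  rw [heq.deriv_eq]
  have h1 : HasDerivAt (fun s : ℝ => 1 - s) (-1) t := by
    simpa using (hasDerivAt_id t).const_sub 1
  have h : HasDerivAt (fun s => -((1 - s) * wfn ℓ s))
      (-((-1) * wfn ℓ t + (1 - t) * deriv (wfn ℓ) t)) t :=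
    (h1.mul (hasDeriv_w ℓ hrange hadm hprop t ht)).neg
  rw [h.deriv]; ring

lemma ratio_eq : ∀ t ∈ Set.Ioo (0:ℝ) 1,
    kplus ℓ t / klog t = 1 / (t * (1 - t) * wfn ℓ t) := by
  intro t ht
  have hw := w_pos ℓ hrange hadm hprop t ht
  have ht0 := ht.1
  have ht1 : 0 < 1 - t := by linarith [ht.2]
  have hX : 0 < t^2 + (1-t)^2 := by positivity
  have hXr : 0 < (t^2 + (1-t)^2) ^ ((3:ℝ)/2) := Real.rpow_pos_of_pos hX _
  have hsgn : Real.sign (deriv (tl ℓ 0) t) = -1 :=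
    Real.sign_of_neg (d0_neg ℓ hrange hadm hprop t ht)
  have hnum : deriv (tl ℓ 0) t * deriv (deriv (tl ℓ 1)) t
      - deriv (deriv (tl ℓ 0)) t * deriv (tl ℓ 1) t = -(wfn ℓ t)^2 := by
    rw [d0_eq ℓ hrange hadm hprop t ht, d1_eq ℓ hrange hadm hprop t ht,
      deriv_d1_eq ℓ hrange hadm hprop t ht, deriv_d0_eq ℓ hrange hadm hprop t ht]
    ring
  have hden : (deriv (tl ℓ 0) t)^2 + (deriv (tl ℓ 1) t)^2
      = (t^2 + (1-t)^2) * (wfn ℓ t)^2 := by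
    rw [d0_eq ℓ hrange hadm hprop t ht, d1_eq ℓ hrange hadm hprop t ht]; ring
  have hpow : ((t^2 + (1-t)^2) * (wfn ℓ t)^2) ^ ((3:ℝ)/2)
      = (t^2 + (1-t)^2) ^ ((3:ℝ)/2) * (wfn ℓ t)^3 := by
    rw [Real.mul_rpow (le_of_lt hX) (sq_nonneg _)]
    congr 1
    rw [← Real.rpow_natCast (wfn ℓ t) 2, ← Real.rpow_mul (le_of_lt hw)]
    norm_num
  unfold kplus klog
  rw [hsgn, hnum, hden, hpow]
  have hw3 : 0 < (wfn ℓ t)^3 := by positivity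
  field_simp

/-- vertex values -/
lemma vertex_le0 : ∀ q ∈ simplex2, ℓ ![1,0] 0 ≤ ℓ q 0 := by
  intro q hq
  have h := hprop ![1,0] (v1_mem) q hq
  simp [Fin.sum_univ_two] at h
  linarith

lemma vertex_le1 : ∀ q ∈ simplex2, ℓ ![0,1] 1 ≤ ℓ q 1 := by
  intro q hq
  have h := hprop ![0,1] (v0_mem) q hq
  simp [Fin.sum_univ_two] at h
  linarith

lemma f1_le_b : ∀ t ∈ Set.Ioo (0:ℝ) 1, tl ℓ 1 t ≤ ℓ ![1,0] 1 := by
  intro t ht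
  have h := hprop ![t, 1-t] (mem_simplex_pt (le_of_lt ht.1) (le_of_lt ht.2)) ![1,0] v1_mem
  simp only [Fin.sum_univ_two, Matrix.cons_val_zero, Matrix.cons_val_one, Matrix.head_cons] at h
  have ha := vertex_le0 ℓ hrange hadm hprop ![t,1-t]
    (mem_simplex_pt (le_of_lt ht.1) (le_of_lt ht.2))
  simp only [tl, Matrix.cons_val_zero, Matrix.cons_val_one, Matrix.head_cons] at *
  nlinarith [ht.1, ht.2]

lemma f0_le_beta : ∀ t ∈ Set.Ioo (0:ℝ) 1, tl ℓ 0 t ≤ ℓ ![0,1] 0 := by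
  intro t ht
  have h := hprop ![t, 1-t] (mem_simplex_pt (le_of_lt ht.1) (le_of_lt ht.2)) ![0,1] v0_mem
  simp only [Fin.sum_univ_two, Matrix.cons_val_zero, Matrix.cons_val_one, Matrix.head_cons] at h
  have ha := vertex_le1 ℓ hrange hadm hprop ![t,1-t]
    (mem_simplex_pt (le_of_lt ht.1) (le_of_lt ht.2))
  simp only [tl, Matrix.cons_val_zero, Matrix.cons_val_one, Matrix.head_cons] at *
  nlinarith [ht.1, ht.2]

lemma f0_upper : ∀ t ∈ Set.Ioo (0:ℝ) 1,
    tl ℓ 0 t ≤ ℓ ![1,0] 0 + (1 - t) * (ℓ ![1,0] 1 - ℓ ![0,1] 1) / t := by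
  intro t ht
  have h := hprop ![t, 1-t] (mem_simplex_pt (le_of_lt ht.1) (le_of_lt ht.2)) ![1,0] v1_mem
  simp only [Fin.sum_univ_two, Matrix.cons_val_zero, Matrix.cons_val_one, Matrix.head_cons] at h
  have ha := vertex_le1 ℓ hrange hadm hprop ![t,1-t]
    (mem_simplex_pt (le_of_lt ht.1) (le_of_lt ht.2))
  simp only [tl, Matrix.cons_val_zero, Matrix.cons_val_one, Matrix.head_cons] at *
  have key : (ℓ ![t,1-t] 0 - ℓ ![1,0] 0) * t ≤ (1-t) * (ℓ ![1,0] 1 - ℓ ![0,1] 1) := by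
    nlinarith [ht.1, ht.2]
  have h2 := (le_div_iff₀ ht.1).mpr key
  linarith

lemma f1_upper : ∀ t ∈ Set.Ioo (0:ℝ) 1,
    tl ℓ 1 t ≤ ℓ ![0,1] 1 + t * (ℓ ![0,1] 0 - ℓ ![1,0] 0) / (1 - t) := by
  intro t ht
  have h := hprop ![t, 1-t] (mem_simplex_pt (le_of_lt ht.1) (le_of_lt ht.2)) ![0,1] v0_mem
  simp only [Fin.sum_univ_two, Matrix.cons_val_zero, Matrix.cons_val_one, Matrix.head_cons] at h
  have ha := vertex_le0 ℓ hrange hadm hprop ![t,1-t]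
    (mem_simplex_pt (le_of_lt ht.1) (le_of_lt ht.2))
  simp only [tl, Matrix.cons_val_zero, Matrix.cons_val_one, Matrix.head_cons] at *
  have ht1 : 0 < 1 - t := by linarith [ht.2]
  have key : (ℓ ![t,1-t] 1 - ℓ ![0,1] 1) * (1-t) ≤ t * (ℓ ![0,1] 0 - ℓ ![1,0] 0) := by
    nlinarith [ht.1, ht.2]
  have h2 := (le_div_iff₀ ht1).mpr key
  linarith

lemma f0_anti : StrictAntiOn (tl ℓ 0) (Set.Ioo 0 1) := by
  apply strictAntiOn_of_deriv_neg (convex_Ioo 0 1) hadm.1.continuousOn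
  intro x hx
  rw [interior_Ioo] at hx
  exact d0_neg ℓ hrange hadm hprop x hx

lemma f1_mono : StrictMonoOn (tl ℓ 1) (Set.Ioo 0 1) := by
  apply strictMonoOn_of_deriv_pos (convex_Ioo 0 1) hadm.2.1.continuousOn
  intro x hx
  rw [interior_Ioo] at hx
  exact d1_pos ℓ hrange hadm hprop x hx

/-- Key pointwise mixability inequality at interior comparison points. -/
lemma claimA_int (η : ℝ) (hη0 : 0 < η)
    (hη : ∀ s ∈ Set.Ioo (0:ℝ) 1, η * (s * (1 - s) * wfn ℓ s) ≤ 1) :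
    ∀ t ∈ Set.Ioo (0:ℝ) 1, ∀ s ∈ Set.Ioo (0:ℝ) 1,
      t * Real.exp (-η * (tl ℓ 0 s - tl ℓ 0 t)) +
        (1 - t) * Real.exp (-η * (tl ℓ 1 s - tl ℓ 1 t)) ≤ 1 := by
  intro t ht
  have ht1 : (0:ℝ) < 1 - t := by linarith [ht.2]
  set A : ℝ → ℝ := fun s => -η * (tl ℓ 0 s - tl ℓ 0 t) with hAdef
  set B : ℝ → ℝ := fun s => -η * (tl ℓ 1 s - tl ℓ 1 t) with hBdef
  set F : ℝ → ℝ := fun s => t * Real.exp (A s) + (1 - t) * Real.exp (B s) with hFdef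
  set Fd : ℝ → ℝ := fun s => t * (Real.exp (A s) * (-η * deriv (tl ℓ 0) s)) +
      (1 - t) * (Real.exp (B s) * (-η * deriv (tl ℓ 1) s)) with hFddef
  have hF1 : F t = 1 := by simp [hFdef, hAdef, hBdef]
  have hFd : ∀ s ∈ Set.Ioo (0:ℝ) 1, HasDerivAt F (Fd s) s := by
    intro s hs
    have hA : HasDerivAt A (-η * deriv (tl ℓ 0) s) s :=
      ((hasDeriv_f0 ℓ hrange hadm hprop s hs).sub_const _).const_mul (-η)
    have hB : HasDerivAt B (-η * deriv (tl ℓ 1) s) s :=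
      ((hasDeriv_f1 ℓ hrange hadm hprop s hs).sub_const _).const_mul (-η)
    exact (hA.exp.const_mul t).add (hB.exp.const_mul (1 - t))
  set G : ℝ → ℝ := fun s => Real.log (t * (1 - s)) + A s - Real.log ((1 - t) * s) - B s
    with hGdef
  have hGt : G t = 0 := by
    simp only [hGdef, hAdef, hBdef, sub_self, mul_zero, neg_zero, mul_comm t (1 - t)]
    ring
  have hGd : ∀ s ∈ Set.Ioo (0:ℝ) 1,
      HasDerivAt G (η * wfn ℓ s - 1 / (s * (1 - s))) s := by
    intro s hs
    have hs1 : (0:ℝ) < 1 - s := by linarith [hs.2]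
    have hA : HasDerivAt A (-η * deriv (tl ℓ 0) s) s :=
      ((hasDeriv_f0 ℓ hrange hadm hprop s hs).sub_const _).const_mul (-η)
    have hB : HasDerivAt B (-η * deriv (tl ℓ 1) s) s :=
      ((hasDeriv_f1 ℓ hrange hadm hprop s hs).sub_const _).const_mul (-η)
    have hg1 : HasDerivAt (fun x : ℝ => t * (1 - x)) (t * (-1)) s :=
      ((hasDerivAt_id s).const_sub 1).const_mul t
    have hg2 : HasDerivAt (fun x : ℝ => (1 - t) * x) ((1 - t) * 1) s :=
      (hasDerivAt_id s).const_mul (1 - t)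
    have hl1 : HasDerivAt (fun x : ℝ => Real.log (t * (1 - x)))
        (t * (-1) / (t * (1 - s))) s := hg1.log (ne_of_gt (mul_pos ht.1 hs1))
    have hl2 : HasDerivAt (fun x : ℝ => Real.log ((1 - t) * x))
        ((1 - t) * 1 / ((1 - t) * s)) s := hg2.log (ne_of_gt (mul_pos ht1 hs.1))
    have hG : HasDerivAt G (t * (-1) / (t * (1 - s)) + (-η * deriv (tl ℓ 0) s)
        - (1 - t) * 1 / ((1 - t) * s) - (-η * deriv (tl ℓ 1) s)) s :=
      ((hl1.add hA).sub hl2).sub hB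
    convert hG using 1
    rw [d0_eq ℓ hrange hadm hprop s hs, d1_eq ℓ hrange hadm hprop s hs]
    have hs0 : s ≠ 0 := ne_of_gt hs.1
    have hs1' : (1:ℝ) - s ≠ 0 := ne_of_gt hs1
    have ht0 : t ≠ 0 := ne_of_gt ht.1
    have ht1' : (1:ℝ) - t ≠ 0 := ne_of_gt ht1
    field_simp
    ring
  have hG'nonpos : ∀ s ∈ Set.Ioo (0:ℝ) 1, η * wfn ℓ s - 1 / (s * (1 - s)) ≤ 0 := by
    intro s hs
    have hs1 : (0:ℝ) < 1 - s := by linarith [hs.2]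
    have hpos : (0:ℝ) < s * (1 - s) := mul_pos hs.1 hs1
    have h := hη s hs
    rw [sub_nonpos, le_div_iff₀ hpos]
    nlinarith
  have hGcont : ∀ x ∈ Set.Ioo (0:ℝ) 1, ContinuousAt G x := fun x hx =>
    (hGd x hx).continuousAt
  -- sign of G
  have hGsign_left : ∀ s ∈ Set.Ioo (0:ℝ) 1, s < t → 0 ≤ G s := by
    intro s hs hst
    have hsub : Set.Icc s t ⊆ Set.Ioo (0:ℝ) 1 := fun x hx =>
      ⟨lt_of_lt_of_le hs.1 hx.1, lt_of_le_of_lt hx.2 ht.2⟩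
    obtain ⟨c, hc, hceq⟩ := exists_hasDerivAt_eq_slope G
      (fun x => η * wfn ℓ x - 1 / (x * (1 - x))) hst
      (fun x hx => (hGcont x (hsub hx)).continuousWithinAt)
      (fun x hx => hGd x (hsub ⟨le_of_lt hx.1, le_of_lt hx.2⟩))
    have hc' := hsub ⟨le_of_lt hc.1, le_of_lt hc.2⟩
    have h1 := hG'nonpos c hc'
    have h2 : (G t - G s) / (t - s) ≤ 0 := hceq ▸ h1
    rw [hGt] at h2
    rcases div_nonpos_iff.mp h2 with ⟨h4, h5⟩ | ⟨h6, h7⟩ <;> linarith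
  have hGsign_right : ∀ s ∈ Set.Ioo (0:ℝ) 1, t < s → G s ≤ 0 := by
    intro s hs hst
    have hsub : Set.Icc t s ⊆ Set.Ioo (0:ℝ) 1 := fun x hx =>
      ⟨lt_of_lt_of_le ht.1 hx.1, lt_of_le_of_lt hx.2 hs.2⟩
    obtain ⟨c, hc, hceq⟩ := exists_hasDerivAt_eq_slope G
      (fun x => η * wfn ℓ x - 1 / (x * (1 - x))) hst
      (fun x hx => (hGcont x (hsub hx)).continuousWithinAt)
      (fun x hx => hGd x (hsub ⟨le_of_lt hx.1, le_of_lt hx.2⟩))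
    have hc' := hsub ⟨le_of_lt hc.1, le_of_lt hc.2⟩
    have h1 := hG'nonpos c hc'
    have h2 : (G s - G t) / (s - t) ≤ 0 := hceq ▸ h1
    rw [hGt] at h2
    rcases div_nonpos_iff.mp h2 with ⟨h4, h5⟩ | ⟨h6, h7⟩ <;> linarith
  -- sign of Fd
  have hFdsign : ∀ s ∈ Set.Ioo (0:ℝ) 1, (s < t → 0 ≤ Fd s) ∧ (t < s → Fd s ≤ 0) := by
    intro s hs
    have hs1 : (0:ℝ) < 1 - s := by linarith [hs.2]
    have hw := w_pos ℓ hrange hadm hprop s hs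
    have hFdeq : Fd s = η * wfn ℓ s *
        ((t * (1 - s)) * Real.exp (A s) - ((1 - t) * s) * Real.exp (B s)) := by
      rw [hFddef]
      simp only
      rw [d0_eq ℓ hrange hadm hprop s hs, d1_eq ℓ hrange hadm hprop s hs]
      ring
    constructor
    · intro hst
      have hGs := hGsign_left s hs hst
      have hle : Real.log ((1 - t) * s) + B s ≤ Real.log (t * (1 - s)) + A s := by
        simp only [hGdef] at hGs; linarith
      have hexp := Real.exp_le_exp.mpr hle
      rw [Real.exp_add, Real.exp_add, Real.exp_log (mul_pos ht1 hs.1),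
        Real.exp_log (mul_pos ht.1 hs1)] at hexp
      rw [hFdeq]
      have h5 : 0 ≤ (t * (1 - s)) * Real.exp (A s) - ((1 - t) * s) * Real.exp (B s) := by
        linarith
      exact mul_nonneg (mul_nonneg hη0.le hw.le) h5
    · intro hst
      have hGs := hGsign_right s hs hst
      have hle : Real.log (t * (1 - s)) + A s ≤ Real.log ((1 - t) * s) + B s := by
        simp only [hGdef] at hGs; linarith
      have hexp := Real.exp_le_exp.mpr hle
      rw [Real.exp_add, Real.exp_add, Real.exp_log (mul_pos ht.1 hs1),
        Real.exp_log (mul_pos ht1 hs.1)] at hexp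
      rw [hFdeq]
      have h5 : (t * (1 - s)) * Real.exp (A s) - ((1 - t) * s) * Real.exp (B s) ≤ 0 := by
        linarith
      have h6 : 0 < η * wfn ℓ s := mul_pos hη0 hw
      nlinarith
  -- conclude
  intro s hs
  show F s ≤ 1
  rcases lt_trichotomy s t with hst | hst | hst
  · have hsub : Set.Icc s t ⊆ Set.Ioo (0:ℝ) 1 := fun x hx =>
      ⟨lt_of_lt_of_le hs.1 hx.1, lt_of_le_of_lt hx.2 ht.2⟩
    obtain ⟨c, hc, hceq⟩ := exists_hasDerivAt_eq_slope F Fd hst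
      (fun x hx => (hFd x (hsub hx)).continuousAt.continuousWithinAt)
      (fun x hx => hFd x (hsub ⟨le_of_lt hx.1, le_of_lt hx.2⟩))
    have hc' := hsub ⟨le_of_lt hc.1, le_of_lt hc.2⟩
    have h1 := (hFdsign c hc').1 hc.2
    have h2 : 0 ≤ (F t - F s) / (t - s) := hceq ▸ h1
    rw [hF1] at h2
    rcases div_nonneg_iff.mp h2 with ⟨h4, h5⟩ | ⟨h6, h7⟩ <;> linarith
  · rw [hst]; rw [hF1]
  · have hsub : Set.Icc t s ⊆ Set.Ioo (0:ℝ) 1 := fun x hx =>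
      ⟨lt_of_lt_of_le ht.1 hx.1, lt_of_le_of_lt hx.2 hs.2⟩
    obtain ⟨c, hc, hceq⟩ := exists_hasDerivAt_eq_slope F Fd hst
      (fun x hx => (hFd x (hsub hx)).continuousAt.continuousWithinAt)
      (fun x hx => hFd x (hsub ⟨le_of_lt hx.1, le_of_lt hx.2⟩))
    have hc' := hsub ⟨le_of_lt hc.1, le_of_lt hc.2⟩
    have h1 := (hFdsign c hc').2 hc.1
    have h2 : (F s - F t) / (s - t) ≤ 0 := hceq ▸ h1
    rw [hF1] at h2
    rcases div_nonpos_iff.mp h2 with ⟨h4, h5⟩ | ⟨h6, h7⟩ <;> linarith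

lemma claimA_v1 (η : ℝ) (hη0 : 0 < η)
    (hη : ∀ s ∈ Set.Ioo (0:ℝ) 1, η * (s * (1 - s) * wfn ℓ s) ≤ 1) :
    ∀ t ∈ Set.Ioo (0:ℝ) 1,
      t * Real.exp (-η * (ℓ ![1,0] 0 - tl ℓ 0 t)) +
        (1 - t) * Real.exp (-η * (ℓ ![1,0] 1 - tl ℓ 1 t)) ≤ 1 := by
  intro t ht
  have ht1 : (0:ℝ) < 1 - t := by linarith [ht.2]
  set a := ℓ ![1,0] 0 with hadef
  set b := ℓ ![1,0] 1 with hbdef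
  set al := ℓ ![0,1] 1 with haldef
  have hba : 0 ≤ b - al := by
    have h1 := f1_le_b ℓ hrange hadm hprop (1/2) (by norm_num)
    have h2 := vertex_le1 ℓ hrange hadm hprop ![(1:ℝ)/2, 1 - 1/2]
      (mem_simplex_pt (by norm_num) (by norm_num))
    simp only [tl] at h1
    linarith
  have key : ∀ s ∈ Set.Ioo (0:ℝ) 1,
      t * Real.exp (-η * (a - tl ℓ 0 t)) + (1 - t) * Real.exp (-η * (b - tl ℓ 1 t))
        ≤ Real.exp (η * ((1 - s) * (b - al) / s)) := by
    intro s hs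
    have hs1 : (0:ℝ) < 1 - s := by linarith [hs.2]
    set c := (1 - s) * (b - al) / s with hcdef
    have hc0 : 0 ≤ c := div_nonneg (mul_nonneg (le_of_lt hs1) hba) (le_of_lt hs.1)
    have hfa : tl ℓ 0 s - c ≤ a := by
      have := f0_upper ℓ hrange hadm hprop s hs
      rw [hcdef, hadef, hbdef, haldef]; linarith
    have hfb : tl ℓ 1 s ≤ b := f1_le_b ℓ hrange hadm hprop s hs
    have h1 : Real.exp (-η * (a - tl ℓ 0 t))
        ≤ Real.exp (η * c) * Real.exp (-η * (tl ℓ 0 s - tl ℓ 0 t)) := by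
      rw [← Real.exp_add]
      apply Real.exp_le_exp.mpr
      nlinarith [mul_nonneg hη0.le (by linarith : (0:ℝ) ≤ a - (tl ℓ 0 s - c))]
    have h2 : Real.exp (-η * (b - tl ℓ 1 t))
        ≤ Real.exp (η * c) * Real.exp (-η * (tl ℓ 1 s - tl ℓ 1 t)) := by
      rw [← Real.exp_add]
      apply Real.exp_le_exp.mpr
      nlinarith [mul_nonneg hη0.le (by linarith : (0:ℝ) ≤ b - tl ℓ 1 s),
        mul_nonneg hη0.le hc0]
    have hint := claimA_int ℓ hrange hadm hprop η hη0 hη t ht s hs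
    calc t * Real.exp (-η * (a - tl ℓ 0 t)) + (1 - t) * Real.exp (-η * (b - tl ℓ 1 t))
        ≤ t * (Real.exp (η * c) * Real.exp (-η * (tl ℓ 0 s - tl ℓ 0 t)))
          + (1 - t) * (Real.exp (η * c) * Real.exp (-η * (tl ℓ 1 s - tl ℓ 1 t))) :=
          add_le_add (mul_le_mul_of_nonneg_left h1 (le_of_lt ht.1))
            (mul_le_mul_of_nonneg_left h2 (le_of_lt ht1))
      _ = Real.exp (η * c) * (t * Real.exp (-η * (tl ℓ 0 s - tl ℓ 0 t))
          + (1 - t) * Real.exp (-η * (tl ℓ 1 s - tl ℓ 1 t))) := by ring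
      _ ≤ Real.exp (η * c) * 1 :=
          mul_le_mul_of_nonneg_left hint (le_of_lt (Real.exp_pos _))
      _ = Real.exp (η * c) := mul_one _
  apply le_one_of_forall
  intro ε hε
  set ep := Real.log (1 + ε) / η with hepdef
  have hep : 0 < ep := div_pos (Real.log_pos (by linarith)) hη0
  have hd1 : (0:ℝ) < 2 * (b - al) + 1 := by linarith
  set dl := min (1/2 : ℝ) (ep / (2 * (b - al) + 1)) with hdldef
  have hdl0 : 0 < dl := lt_min (by norm_num) (div_pos hep hd1)
  have hdl2 : dl ≤ 1/2 := min_le_left _ _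
  have h3 : dl ≤ ep / (2 * (b - al) + 1) := min_le_right _ _
  have h4 : dl * (2 * (b - al) + 1) ≤ ep := by
    rw [← le_div_iff₀ hd1]; exact h3
  set s := 1 - dl with hsdef
  have hs : s ∈ Set.Ioo (0:ℝ) 1 := by
    constructor
    · rw [hsdef]; linarith
    · rw [hsdef]; linarith
  have hcle : (1 - s) * (b - al) / s ≤ ep := by
    rw [hsdef, show (1:ℝ) - (1 - dl) = dl by ring]
    have h5 : (0:ℝ) < 1 - dl := by linarith
    rw [div_le_iff₀ h5]
    nlinarith [mul_nonneg hep.le (show (0:ℝ) ≤ 1/2 - dl by linarith),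
      mul_nonneg hdl0.le hba]
  have hfin := key s hs
  have hexp : Real.exp (η * ((1 - s) * (b - al) / s)) ≤ 1 + ε :=
    calc Real.exp (η * ((1 - s) * (b - al) / s)) ≤ Real.exp (η * ep) :=
        Real.exp_le_exp.mpr (mul_le_mul_of_nonneg_left hcle (le_of_lt hη0))
      _ = 1 + ε := by
        rw [hepdef, mul_div_cancel₀ _ (ne_of_gt hη0)]
        exact Real.exp_log (by linarith)
  linarith

lemma claimA_v0 (η : ℝ) (hη0 : 0 < η)
    (hη : ∀ s ∈ Set.Ioo (0:ℝ) 1, η * (s * (1 - s) * wfn ℓ s) ≤ 1) :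
    ∀ t ∈ Set.Ioo (0:ℝ) 1,
      t * Real.exp (-η * (ℓ ![0,1] 0 - tl ℓ 0 t)) +
        (1 - t) * Real.exp (-η * (ℓ ![0,1] 1 - tl ℓ 1 t)) ≤ 1 := by
  intro t ht
  have ht1 : (0:ℝ) < 1 - t := by linarith [ht.2]
  set bt := ℓ ![0,1] 0 with hbtdef
  set al := ℓ ![0,1] 1 with haldef
  set a := ℓ ![1,0] 0 with hadef
  have hba : 0 ≤ bt - a := by
    have h2 := vertex_le0 ℓ hrange hadm hprop ![(0:ℝ),1] v0_mem
    linarith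
  have key : ∀ s ∈ Set.Ioo (0:ℝ) 1,
      t * Real.exp (-η * (bt - tl ℓ 0 t)) + (1 - t) * Real.exp (-η * (al - tl ℓ 1 t))
        ≤ Real.exp (η * (s * (bt - a) / (1 - s))) := by
    intro s hs
    have hs1 : (0:ℝ) < 1 - s := by linarith [hs.2]
    set c := s * (bt - a) / (1 - s) with hcdef
    have hc0 : 0 ≤ c := div_nonneg (mul_nonneg (le_of_lt hs.1) hba) (le_of_lt hs1)
    have hfal : tl ℓ 1 s - c ≤ al := by
      have := f1_upper ℓ hrange hadm hprop s hs
      rw [hcdef, hadef, hbtdef, haldef]; linarith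
    have hfbt : tl ℓ 0 s ≤ bt := f0_le_beta ℓ hrange hadm hprop s hs
    have h1 : Real.exp (-η * (bt - tl ℓ 0 t))
        ≤ Real.exp (η * c) * Real.exp (-η * (tl ℓ 0 s - tl ℓ 0 t)) := by
      rw [← Real.exp_add]
      apply Real.exp_le_exp.mpr
      nlinarith [mul_nonneg hη0.le (by linarith : (0:ℝ) ≤ bt - tl ℓ 0 s),
        mul_nonneg hη0.le hc0]
    have h2 : Real.exp (-η * (al - tl ℓ 1 t))
        ≤ Real.exp (η * c) * Real.exp (-η * (tl ℓ 1 s - tl ℓ 1 t)) := by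
      rw [← Real.exp_add]
      apply Real.exp_le_exp.mpr
      nlinarith [mul_nonneg hη0.le (by linarith : (0:ℝ) ≤ al - (tl ℓ 1 s - c))]
    have hint := claimA_int ℓ hrange hadm hprop η hη0 hη t ht s hs
    calc t * Real.exp (-η * (bt - tl ℓ 0 t)) + (1 - t) * Real.exp (-η * (al - tl ℓ 1 t))
        ≤ t * (Real.exp (η * c) * Real.exp (-η * (tl ℓ 0 s - tl ℓ 0 t)))
          + (1 - t) * (Real.exp (η * c) * Real.exp (-η * (tl ℓ 1 s - tl ℓ 1 t))) :=
          add_le_add (mul_le_mul_of_nonneg_left h1 (le_of_lt ht.1))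
            (mul_le_mul_of_nonneg_left h2 (le_of_lt ht1))
      _ = Real.exp (η * c) * (t * Real.exp (-η * (tl ℓ 0 s - tl ℓ 0 t))
          + (1 - t) * Real.exp (-η * (tl ℓ 1 s - tl ℓ 1 t))) := by ring
      _ ≤ Real.exp (η * c) * 1 :=
          mul_le_mul_of_nonneg_left hint (le_of_lt (Real.exp_pos _))
      _ = Real.exp (η * c) := mul_one _
  apply le_one_of_forall
  intro ε hε
  set ep := Real.log (1 + ε) / η with hepdef
  have hep : 0 < ep := div_pos (Real.log_pos (by linarith)) hη0
  have hd1 : (0:ℝ) < 2 * (bt - a) + 1 := by linarith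
  set dl := min (1/2 : ℝ) (ep / (2 * (bt - a) + 1)) with hdldef
  have hdl0 : 0 < dl := lt_min (by norm_num) (div_pos hep hd1)
  have hdl2 : dl ≤ 1/2 := min_le_left _ _
  have h3 : dl ≤ ep / (2 * (bt - a) + 1) := min_le_right _ _
  have h4 : dl * (2 * (bt - a) + 1) ≤ ep := by
    rw [← le_div_iff₀ hd1]; exact h3
  have hs : dl ∈ Set.Ioo (0:ℝ) 1 := ⟨hdl0, by linarith⟩
  have hcle : dl * (bt - a) / (1 - dl) ≤ ep := by
    have h5 : (0:ℝ) < 1 - dl := by linarith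
    rw [div_le_iff₀ h5]
    nlinarith [mul_nonneg hep.le (show (0:ℝ) ≤ 1/2 - dl by linarith),
      mul_nonneg hdl0.le hba]
  have hfin := key dl hs
  have hexp : Real.exp (η * (dl * (bt - a) / (1 - dl))) ≤ 1 + ε :=
    calc Real.exp (η * (dl * (bt - a) / (1 - dl))) ≤ Real.exp (η * ep) :=
        Real.exp_le_exp.mpr (mul_le_mul_of_nonneg_left hcle (le_of_lt hη0))
      _ = 1 + ε := by
        rw [hepdef, mul_div_cancel₀ _ (ne_of_gt hη0)]
        exact Real.exp_log (by linarith)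
  linarith

/-- Claim A for arbitrary simplex points. -/
lemma claimA_all (η : ℝ) (hη0 : 0 < η)
    (hη : ∀ s ∈ Set.Ioo (0:ℝ) 1, η * (s * (1 - s) * wfn ℓ s) ≤ 1) :
    ∀ q ∈ simplex2, ∀ t ∈ Set.Ioo (0:ℝ) 1,
      t * Real.exp (-η * (ℓ q 0 - tl ℓ 0 t)) +
        (1 - t) * Real.exp (-η * (ℓ q 1 - tl ℓ 1 t)) ≤ 1 := by
  intro q hq t ht
  obtain ⟨hqe, hq0, hq1⟩ := simplex_eq hq
  rcases eq_or_lt_of_le hq0 with h0 | h0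
  · have : q = ![0,1] := by rw [hqe, ← h0]; norm_num
    rw [this]
    exact claimA_v0 ℓ hrange hadm hprop η hη0 hη t ht
  rcases eq_or_lt_of_le hq1 with h1 | h1
  · have : q = ![1,0] := by rw [hqe, h1]; norm_num
    rw [this]
    exact claimA_v1 ℓ hrange hadm hprop η hη0 hη t ht
  · have hmem : q 0 ∈ Set.Ioo (0:ℝ) 1 := ⟨h0, h1⟩
    have h2 := claimA_int ℓ hrange hadm hprop η hη0 hη t ht (q 0) hmem
    have e0 : tl ℓ 0 (q 0) = ℓ q 0 := by rw [tl, ← hqe]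
    have e1 : tl ℓ 1 (q 0) = ℓ q 1 := by rw [tl, ← hqe]
    rw [e0, e1] at h2
    exact h2

lemma f0_approach : ∀ ep : ℝ, 0 < ep → ∃ t ∈ Set.Ioo (0:ℝ) 1,
    tl ℓ 0 t ≤ ℓ ![1,0] 0 + ep := by
  intro ep hep
  set b := ℓ ![1,0] 1 with hbdef
  set al := ℓ ![0,1] 1 with haldef
  have hba : 0 ≤ b - al := by
    have h1 := f1_le_b ℓ hrange hadm hprop (1/2) (by norm_num)
    have h2 := vertex_le1 ℓ hrange hadm hprop ![(1:ℝ)/2, 1 - 1/2]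
      (mem_simplex_pt (by norm_num) (by norm_num))
    simp only [tl] at h1
    linarith
  have hd1 : (0:ℝ) < 2 * (b - al) + 1 := by linarith
  set dl := min (1/2 : ℝ) (ep / (2 * (b - al) + 1)) with hdldef
  have hdl0 : 0 < dl := lt_min (by norm_num) (div_pos hep hd1)
  have hdl2 : dl ≤ 1/2 := min_le_left _ _
  have h4 : dl * (2 * (b - al) + 1) ≤ ep := by
    rw [← le_div_iff₀ hd1]; exact min_le_right _ _
  refine ⟨1 - dl, ⟨by linarith, by linarith⟩, ?_⟩
  have ht : (1 - dl : ℝ) ∈ Set.Ioo (0:ℝ) 1 := ⟨by linarith, by linarith⟩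
  have hup := f0_upper ℓ hrange hadm hprop (1 - dl) ht
  rw [← hbdef, ← haldef] at hup
  have hcle : (1 - (1 - dl)) * (b - al) / (1 - dl) ≤ ep := by
    rw [show (1:ℝ) - (1 - dl) = dl by ring]
    have h5 : (0:ℝ) < 1 - dl := by linarith
    rw [div_le_iff₀ h5]
    nlinarith [mul_nonneg hep.le (show (0:ℝ) ≤ 1/2 - dl by linarith),
      mul_nonneg hdl0.le hba]
  linarith

lemma f1_approach : ∀ ep : ℝ, 0 < ep → ∃ t ∈ Set.Ioo (0:ℝ) 1,
    tl ℓ 1 t ≤ ℓ ![0,1] 1 + ep := by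
  intro ep hep
  set bt := ℓ ![0,1] 0 with hbtdef
  set a := ℓ ![1,0] 0 with hadef
  have hba : 0 ≤ bt - a := by
    have h2 := vertex_le0 ℓ hrange hadm hprop ![(0:ℝ),1] v0_mem
    rw [← hbtdef, ← hadef] at h2
    linarith
  have hd1 : (0:ℝ) < 2 * (bt - a) + 1 := by linarith
  set dl := min (1/2 : ℝ) (ep / (2 * (bt - a) + 1)) with hdldef
  have hdl0 : 0 < dl := lt_min (by norm_num) (div_pos hep hd1)
  have hdl2 : dl ≤ 1/2 := min_le_left _ _
  have h4 : dl * (2 * (bt - a) + 1) ≤ ep := by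
    rw [← le_div_iff₀ hd1]; exact min_le_right _ _
  refine ⟨dl, ⟨hdl0, by linarith⟩, ?_⟩
  have ht : dl ∈ Set.Ioo (0:ℝ) 1 := ⟨hdl0, by linarith⟩
  have hup := f1_upper ℓ hrange hadm hprop dl ht
  rw [← hbtdef, ← hadef] at hup
  have hcle : dl * (bt - a) / (1 - dl) ≤ ep := by
    have h5 : (0:ℝ) < 1 - dl := by linarith
    rw [div_le_iff₀ h5]
    nlinarith [mul_nonneg hep.le (show (0:ℝ) ≤ 1/2 - dl by linarith),
      mul_nonneg hdl0.le hba]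
  linarith

lemma mem_S_iff (η : ℝ) (hη0 : 0 < η) (x : Fin 2 → ℝ) :
    x ∈ Eproj2 η '' spr2 ℓ ↔
      ((∀ i, 0 < x i) ∧ ∃ q ∈ simplex2, ∀ i, x i ≤ Real.exp (-η * ℓ q i)) := by
  constructor
  · rintro ⟨y, ⟨hy0, q, hq, hqy⟩, rfl⟩
    refine ⟨fun i => Real.exp_pos _, q, hq, fun i => ?_⟩
    apply Real.exp_le_exp.mpr
    have := hqy i
    nlinarith
  · rintro ⟨hx0, q, hq, hxq⟩
    refine ⟨fun i => -Real.log (x i) / η, ⟨?_, q, hq, ?_⟩, ?_⟩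
    · intro i
      have h1 : x i ≤ 1 := by
        refine le_trans (hxq i) ?_
        rw [← Real.exp_zero]
        apply Real.exp_le_exp.mpr
        have := hrange q hq i
        nlinarith
      have h2 : Real.log (x i) ≤ 0 := Real.log_nonpos (le_of_lt (hx0 i)) h1
      exact div_nonneg (neg_nonneg.2 h2) (le_of_lt hη0)
    · intro i
      have h2 : Real.log (x i) ≤ -η * ℓ q i := by
        rw [Real.log_le_iff_le_exp (hx0 i)]
        exact hxq i
      show ℓ q i ≤ -Real.log (x i) / η
      rw [le_div_iff₀ hη0]
      linarith
    · funext i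
      show Real.exp (-η * (-Real.log (x i) / η)) = x i
      rw [show -η * (-Real.log (x i)/η) = Real.log (x i) by field_simp]
      exact Real.exp_log (hx0 i)

lemma mix_of_bound (η : ℝ) (hη0 : 0 < η)
    (hη : ∀ s ∈ Set.Ioo (0:ℝ) 1, η * (s * (1 - s) * wfn ℓ s) ≤ 1) :
    IsMixable2 η ℓ := by
  intro x₁ hx₁ x₂ hx₂ lam mu hlam hmu hsum
  rcases eq_or_lt_of_le hlam with h0 | hlam0
  · have hmu1 : mu = 1 := by linarith
    rw [← h0, hmu1]
    simpa using hx₂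
  rcases eq_or_lt_of_le hmu with h0 | hmu0
  · have hlam1 : lam = 1 := by linarith
    rw [← h0, hlam1]
    simpa using hx₁
  obtain ⟨hx₁pos, q₁, hq₁, hx₁le⟩ := (mem_S_iff ℓ hrange hadm hprop η hη0 x₁).mp hx₁
  obtain ⟨hx₂pos, q₂, hq₂, hx₂le⟩ := (mem_S_iff ℓ hrange hadm hprop η hη0 x₂).mp hx₂
  set U := lam * x₁ 0 + mu * x₂ 0 with hUdef
  set V := lam * x₁ 1 + mu * x₂ 1 with hVdef
  have hz0 : (lam • x₁ + mu • x₂) 0 = U := by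
    simp [hUdef, Pi.add_apply, Pi.smul_apply, smul_eq_mul]
  have hz1 : (lam • x₁ + mu • x₂) 1 = V := by
    simp [hVdef, Pi.add_apply, Pi.smul_apply, smul_eq_mul]
  have hUpos : 0 < U := by
    have := hx₁pos 0; have := hx₂pos 0; positivity
  have hVpos : 0 < V := by
    have := hx₁pos 1; have := hx₂pos 1; positivity
  have hzpos : ∀ i, 0 < (lam • x₁ + mu • x₂) i := by
    intro i; fin_cases i
    · show 0 < (lam • x₁ + mu • x₂) 0; rw [hz0]; exact hUpos
    · show 0 < (lam • x₁ + mu • x₂) 1; rw [hz1]; exact hVpos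
  -- the star inequality
  have hstar : ∀ t ∈ Set.Ioo (0:ℝ) 1,
      t * Real.exp (η * tl ℓ 0 t) * U + (1 - t) * Real.exp (η * tl ℓ 1 t) * V ≤ 1 := by
    intro t ht
    have ht1 : (0:ℝ) < 1 - t := by linarith [ht.2]
    have hk : ∀ (x : Fin 2 → ℝ) (q : Fin 2 → ℝ), q ∈ simplex2 →
        (∀ i, x i ≤ Real.exp (-η * ℓ q i)) →
        t * Real.exp (η * tl ℓ 0 t) * x 0 + (1 - t) * Real.exp (η * tl ℓ 1 t) * x 1 ≤ 1 := by
      intro x q hq hxle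
      have hA := claimA_all ℓ hrange hadm hprop η hη0 hη q hq t ht
      have e0 : Real.exp (-η * (ℓ q 0 - tl ℓ 0 t))
          = Real.exp (η * tl ℓ 0 t) * Real.exp (-η * ℓ q 0) := by
        rw [← Real.exp_add]; congr 1; ring
      have e1 : Real.exp (-η * (ℓ q 1 - tl ℓ 1 t))
          = Real.exp (η * tl ℓ 1 t) * Real.exp (-η * ℓ q 1) := by
        rw [← Real.exp_add]; congr 1; ring
      rw [e0, e1] at hA
      have h0 := hxle 0
      have h1 := hxle 1
      nlinarith [Real.exp_pos (η * tl ℓ 0 t), Real.exp_pos (η * tl ℓ 1 t),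
        mul_pos ht.1 (Real.exp_pos (η * tl ℓ 0 t)),
        mul_pos ht1 (Real.exp_pos (η * tl ℓ 1 t))]
    have h1 := hk x₁ q₁ hq₁ hx₁le
    have h2 := hk x₂ q₂ hq₂ hx₂le
    calc t * Real.exp (η * tl ℓ 0 t) * U + (1 - t) * Real.exp (η * tl ℓ 1 t) * V
        = lam * (t * Real.exp (η * tl ℓ 0 t) * x₁ 0
            + (1 - t) * Real.exp (η * tl ℓ 1 t) * x₁ 1)
          + mu * (t * Real.exp (η * tl ℓ 0 t) * x₂ 0
            + (1 - t) * Real.exp (η * tl ℓ 1 t) * x₂ 1) := by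
          rw [hUdef, hVdef]; ring
      _ ≤ lam * 1 + mu * 1 :=
          add_le_add (mul_le_mul_of_nonneg_left h1 hlam)
            (mul_le_mul_of_nonneg_left h2 hmu)
      _ = 1 := by linarith
  -- abbreviations for the transformed curve
  set hf : ℝ → ℝ := fun t => Real.exp (-η * tl ℓ 0 t) with hhfdef
  set gf : ℝ → ℝ := fun t => Real.exp (-η * tl ℓ 1 t) with hgfdef
  have hfE : ∀ t, Real.exp (η * tl ℓ 0 t) * hf t = 1 := by
    intro t
    rw [hhfdef]
    rw [← Real.exp_add, show η * tl ℓ 0 t + -η * tl ℓ 0 t = 0 by ring, Real.exp_zero]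
  have hgE : ∀ t, Real.exp (η * tl ℓ 1 t) * gf t = 1 := by
    intro t
    rw [hgfdef]
    rw [← Real.exp_add, show η * tl ℓ 1 t + -η * tl ℓ 1 t = 0 by ring, Real.exp_zero]
  -- one-sided consequences of hstar
  have hUV : ∀ t ∈ Set.Ioo (0:ℝ) 1, hf t < U → V < gf t := by
    intro t ht hlt
    have ht1 : (0:ℝ) < 1 - t := by linarith [ht.2]
    have hE0 := Real.exp_pos (η * tl ℓ 0 t)
    have hE1 := Real.exp_pos (η * tl ℓ 1 t)
    have h1 : 1 < Real.exp (η * tl ℓ 0 t) * U := by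
      have := mul_lt_mul_of_pos_left hlt hE0
      rw [hfE t] at this
      exact this
    have h2 : (1 - t) * (Real.exp (η * tl ℓ 1 t) * V) < 1 - t := by
      have := hstar t ht
      nlinarith [mul_pos ht.1 (sub_pos.2 h1)]
    have h3 : Real.exp (η * tl ℓ 1 t) * V < 1 := by
      have := (mul_lt_mul_iff_right₀ ht1).mp (by linarith : (1-t) * (Real.exp (η * tl ℓ 1 t) * V) < (1-t) * 1)
      exact this
    rw [← hgE t] at h3
    exact (mul_lt_mul_iff_right₀ hE1).mp h3
  have hVU : ∀ t ∈ Set.Ioo (0:ℝ) 1, gf t < V → U < hf t := by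
    intro t ht hlt
    have ht1 : (0:ℝ) < 1 - t := by linarith [ht.2]
    have hE0 := Real.exp_pos (η * tl ℓ 0 t)
    have hE1 := Real.exp_pos (η * tl ℓ 1 t)
    have h1 : 1 < Real.exp (η * tl ℓ 1 t) * V := by
      have := mul_lt_mul_of_pos_left hlt hE1
      rw [hgE t] at this
      exact this
    have h2 : t * (Real.exp (η * tl ℓ 0 t) * U) < t := by
      have := hstar t ht
      nlinarith [mul_pos ht1 (sub_pos.2 h1)]
    have h3 : Real.exp (η * tl ℓ 0 t) * U < 1 := by
      exact (mul_lt_mul_iff_right₀ ht.1).mp (by linarith : t * (Real.exp (η * tl ℓ 0 t) * U) < t * 1)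
    rw [← hfE t] at h3
    exact (mul_lt_mul_iff_right₀ hE0).mp h3
  -- monotonicity of the transformed curve
  have hfmono : ∀ t ∈ Set.Ioo (0:ℝ) 1, ∀ t' ∈ Set.Ioo (0:ℝ) 1, t < t' → hf t < hf t' := by
    intro t ht t' ht' hlt
    rw [hhfdef]
    apply Real.exp_lt_exp.mpr
    have := f0_anti ℓ hrange hadm hprop ht ht' hlt
    nlinarith
  have hgmono : ∀ t ∈ Set.Ioo (0:ℝ) 1, ∀ t' ∈ Set.Ioo (0:ℝ) 1, t < t' → gf t' < gf t := by
    intro t ht t' ht' hlt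
    rw [hgfdef]
    apply Real.exp_lt_exp.mpr
    have := f1_mono ℓ hrange hadm hprop ht ht' hlt
    nlinarith
  rw [mem_S_iff ℓ hrange hadm hprop η hη0]
  refine ⟨hzpos, ?_⟩
  by_cases hcase : ∃ t ∈ Set.Ioo (0:ℝ) 1, U ≤ hf t ∧ V ≤ gf t
  · -- Case 1: interior witness
    obtain ⟨t, ht, hU, hV⟩ := hcase
    refine ⟨![t, 1-t], mem_simplex_pt (le_of_lt ht.1) (le_of_lt ht.2), ?_⟩
    intro i; fin_cases i
    · show (lam • x₁ + mu • x₂) 0 ≤ Real.exp (-η * tl ℓ 0 t)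
      rw [hz0]; exact hU
    · show (lam • x₁ + mu • x₂) 1 ≤ Real.exp (-η * tl ℓ 1 t)
      rw [hz1]; exact hV
  push_neg at hcase
  by_cases h2a : ∀ t ∈ Set.Ioo (0:ℝ) 1, hf t < U
  · -- Case 2a
    set a := ℓ ![1,0] 0 with hadef
    have h1e : x₁ 0 ≤ Real.exp (-η * a) := by
      refine le_trans (hx₁le 0) (Real.exp_le_exp.mpr ?_)
      have h := vertex_le0 ℓ hrange hadm hprop q₁ hq₁
      linarith [mul_le_mul_of_nonneg_left h hη0.le]
    have h2e : x₂ 0 ≤ Real.exp (-η * a) := by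
      refine le_trans (hx₂le 0) (Real.exp_le_exp.mpr ?_)
      have h := vertex_le0 ℓ hrange hadm hprop q₂ hq₂
      linarith [mul_le_mul_of_nonneg_left h hη0.le]
    have hsumE : lam * Real.exp (-η * a) + mu * Real.exp (-η * a) = Real.exp (-η * a) := by
      rw [← add_mul, hsum, one_mul]
    have hUle : U ≤ Real.exp (-η * a) := by
      rw [hUdef]
      have i1 := mul_le_mul_of_nonneg_left h1e hlam
      have i2 := mul_le_mul_of_nonneg_left h2e hmu
      linarith
    have hUge : Real.exp (-η * a) ≤ U := by
      by_contra hUlt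
      push_neg at hUlt
      have hU0 : 0 < U := hUpos
      have hlog : Real.log U < -η * a := by
        rw [show -η*a = Real.log (Real.exp (-η*a)) by rw [Real.log_exp]]
        exact Real.log_lt_log hU0 hUlt
      have hep : 0 < (-η * a - Real.log U) / η := div_pos (by linarith) hη0
      obtain ⟨t, ht, htl0⟩ := f0_approach ℓ hrange hadm hprop _ hep
      rw [← hadef] at htl0
      have htl : tl ℓ 0 t ≤ a + (-η * a - Real.log U) / η := htl0
      set ep := (-η * a - Real.log U) / η with hepdef
      have hfge : U ≤ hf t := by
        have hex : Real.exp (-η * (a + ep)) ≤ Real.exp (-η * tl ℓ 0 t) :=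
          Real.exp_le_exp.mpr (by linarith [mul_le_mul_of_nonneg_left htl hη0.le])
        have he : Real.exp (-η * (a + ep)) = U := by
          rw [show -η * (a + ep) = Real.log U by rw [hepdef]; field_simp; ring]
          exact Real.exp_log hU0
        rw [hhfdef]
        rw [← he]
        exact hex
      exact absurd (h2a t ht) (not_lt.2 hfge)
    have hUeq : U = Real.exp (-η * a) := le_antisymm hUle hUge
    have hx1eq : x₁ 0 = Real.exp (-η * a) := by
      by_contra hne
      have hlt : x₁ 0 < Real.exp (-η * a) := lt_of_le_of_ne h1e hne
      rw [hUdef] at hUeq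
      have i1 := mul_lt_mul_of_pos_left hlt hlam0
      have i2 := mul_le_mul_of_nonneg_left h2e hmu
      linarith
    have hx2eq : x₂ 0 = Real.exp (-η * a) := by
      by_contra hne
      have hlt : x₂ 0 < Real.exp (-η * a) := lt_of_le_of_ne h2e hne
      rw [hUdef] at hUeq
      have i1 := mul_lt_mul_of_pos_left hlt hmu0
      have i2 := mul_le_mul_of_nonneg_left h1e hlam
      linarith
    have hq1a : ℓ q₁ 0 = a := by
      have h := hx₁le 0
      rw [hx1eq] at h
      have h2 := Real.exp_le_exp.mp h
      have hge := vertex_le0 ℓ hrange hadm hprop q₁ hq₁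
      rw [← hadef] at hge
      have h3 : η * ℓ q₁ 0 ≤ η * a := by linarith
      have h4 := (mul_le_mul_iff_right₀ hη0).mp h3
      linarith
    have hq2a : ℓ q₂ 0 = a := by
      have h := hx₂le 0
      rw [hx2eq] at h
      have h2 := Real.exp_le_exp.mp h
      have hge := vertex_le0 ℓ hrange hadm hprop q₂ hq₂
      rw [← hadef] at hge
      have h3 : η * ℓ q₂ 0 ≤ η * a := by linarith
      have h4 := (mul_le_mul_iff_right₀ hη0).mp h3
      linarith
    rcases le_total (Real.exp (-η * ℓ q₁ 1)) (Real.exp (-η * ℓ q₂ 1)) with hcmp | hcmp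
    · refine ⟨q₂, hq₂, ?_⟩
      intro i; fin_cases i
      · show (lam • x₁ + mu • x₂) 0 ≤ Real.exp (-η * ℓ q₂ 0)
        rw [hz0, hq2a]
        exact hUeq.le
      · show (lam • x₁ + mu • x₂) 1 ≤ Real.exp (-η * ℓ q₂ 1)
        rw [hz1, hVdef]
        have hv1 := hx₁le 1
        have hv2 := hx₂le 1
        have i1 := mul_le_mul_of_nonneg_left (le_trans hv1 hcmp) hlam
        have i2 := mul_le_mul_of_nonneg_left hv2 hmu
        have hsE : lam * Real.exp (-η * ℓ q₂ 1) + mu * Real.exp (-η * ℓ q₂ 1)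
            = Real.exp (-η * ℓ q₂ 1) := by rw [← add_mul, hsum, one_mul]
        linarith
    · refine ⟨q₁, hq₁, ?_⟩
      intro i; fin_cases i
      · show (lam • x₁ + mu • x₂) 0 ≤ Real.exp (-η * ℓ q₁ 0)
        rw [hz0, hq1a]
        exact hUeq.le
      · show (lam • x₁ + mu • x₂) 1 ≤ Real.exp (-η * ℓ q₁ 1)
        rw [hz1, hVdef]
        have hv1 := hx₁le 1
        have hv2 := hx₂le 1
        have i1 := mul_le_mul_of_nonneg_left hv1 hlam
        have i2 := mul_le_mul_of_nonneg_left (le_trans hv2 hcmp) hmu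
        have hsE : lam * Real.exp (-η * ℓ q₁ 1) + mu * Real.exp (-η * ℓ q₁ 1)
            = Real.exp (-η * ℓ q₁ 1) := by rw [← add_mul, hsum, one_mul]
        linarith
  by_cases h2b : ∀ t ∈ Set.Ioo (0:ℝ) 1, gf t < V
  · -- Case 2b
    set al := ℓ ![0,1] 1 with haldef
    have h1e : x₁ 1 ≤ Real.exp (-η * al) := by
      refine le_trans (hx₁le 1) (Real.exp_le_exp.mpr ?_)
      have h := vertex_le1 ℓ hrange hadm hprop q₁ hq₁
      linarith [mul_le_mul_of_nonneg_left h hη0.le]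
    have h2e : x₂ 1 ≤ Real.exp (-η * al) := by
      refine le_trans (hx₂le 1) (Real.exp_le_exp.mpr ?_)
      have h := vertex_le1 ℓ hrange hadm hprop q₂ hq₂
      linarith [mul_le_mul_of_nonneg_left h hη0.le]
    have hsumE : lam * Real.exp (-η * al) + mu * Real.exp (-η * al) = Real.exp (-η * al) := by
      rw [← add_mul, hsum, one_mul]
    have hVle : V ≤ Real.exp (-η * al) := by
      rw [hVdef]
      have i1 := mul_le_mul_of_nonneg_left h1e hlam
      have i2 := mul_le_mul_of_nonneg_left h2e hmu
      linarith
    have hVge : Real.exp (-η * al) ≤ V := by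
      by_contra hVlt
      push_neg at hVlt
      have hV0 : 0 < V := hVpos
      have hlog : Real.log V < -η * al := by
        rw [show -η*al = Real.log (Real.exp (-η*al)) by rw [Real.log_exp]]
        exact Real.log_lt_log hV0 hVlt
      have hep : 0 < (-η * al - Real.log V) / η := div_pos (by linarith) hη0
      obtain ⟨t, ht, htl0⟩ := f1_approach ℓ hrange hadm hprop _ hep
      rw [← haldef] at htl0
      have htl : tl ℓ 1 t ≤ al + (-η * al - Real.log V) / η := htl0
      set ep := (-η * al - Real.log V) / η with hepdef
      have hgge : V ≤ gf t := by
        have hex : Real.exp (-η * (al + ep)) ≤ Real.exp (-η * tl ℓ 1 t) :=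
          Real.exp_le_exp.mpr (by linarith [mul_le_mul_of_nonneg_left htl hη0.le])
        have he : Real.exp (-η * (al + ep)) = V := by
          rw [show -η * (al + ep) = Real.log V by rw [hepdef]; field_simp; ring]
          exact Real.exp_log hV0
        rw [hgfdef]
        rw [← he]
        exact hex
      exact absurd (h2b t ht) (not_lt.2 hgge)
    have hVeq : V = Real.exp (-η * al) := le_antisymm hVle hVge
    have hx1eq : x₁ 1 = Real.exp (-η * al) := by
      by_contra hne
      have hlt : x₁ 1 < Real.exp (-η * al) := lt_of_le_of_ne h1e hne
      rw [hVdef] at hVeq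
      have i1 := mul_lt_mul_of_pos_left hlt hlam0
      have i2 := mul_le_mul_of_nonneg_left h2e hmu
      linarith
    have hx2eq : x₂ 1 = Real.exp (-η * al) := by
      by_contra hne
      have hlt : x₂ 1 < Real.exp (-η * al) := lt_of_le_of_ne h2e hne
      rw [hVdef] at hVeq
      have i1 := mul_lt_mul_of_pos_left hlt hmu0
      have i2 := mul_le_mul_of_nonneg_left h1e hlam
      linarith
    have hq1a : ℓ q₁ 1 = al := by
      have h := hx₁le 1
      rw [hx1eq] at h
      have h2 := Real.exp_le_exp.mp h
      have hge := vertex_le1 ℓ hrange hadm hprop q₁ hq₁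
      rw [← haldef] at hge
      have h3 : η * ℓ q₁ 1 ≤ η * al := by linarith
      have h4 := (mul_le_mul_iff_right₀ hη0).mp h3
      linarith
    have hq2a : ℓ q₂ 1 = al := by
      have h := hx₂le 1
      rw [hx2eq] at h
      have h2 := Real.exp_le_exp.mp h
      have hge := vertex_le1 ℓ hrange hadm hprop q₂ hq₂
      rw [← haldef] at hge
      have h3 : η * ℓ q₂ 1 ≤ η * al := by linarith
      have h4 := (mul_le_mul_iff_right₀ hη0).mp h3
      linarith
    rcases le_total (Real.exp (-η * ℓ q₁ 0)) (Real.exp (-η * ℓ q₂ 0)) with hcmp | hcmp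
    · refine ⟨q₂, hq₂, ?_⟩
      intro i; fin_cases i
      · show (lam • x₁ + mu • x₂) 0 ≤ Real.exp (-η * ℓ q₂ 0)
        rw [hz0, hUdef]
        have hv1 := hx₁le 0
        have hv2 := hx₂le 0
        have i1 := mul_le_mul_of_nonneg_left (le_trans hv1 hcmp) hlam
        have i2 := mul_le_mul_of_nonneg_left hv2 hmu
        have hsE : lam * Real.exp (-η * ℓ q₂ 0) + mu * Real.exp (-η * ℓ q₂ 0)
            = Real.exp (-η * ℓ q₂ 0) := by rw [← add_mul, hsum, one_mul]
        linarith
      · show (lam • x₁ + mu • x₂) 1 ≤ Real.exp (-η * ℓ q₂ 1)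
        rw [hz1, hq2a]
        exact hVeq.le
    · refine ⟨q₁, hq₁, ?_⟩
      intro i; fin_cases i
      · show (lam • x₁ + mu • x₂) 0 ≤ Real.exp (-η * ℓ q₁ 0)
        rw [hz0, hUdef]
        have hv1 := hx₁le 0
        have hv2 := hx₂le 0
        have i1 := mul_le_mul_of_nonneg_left hv1 hlam
        have i2 := mul_le_mul_of_nonneg_left (le_trans hv2 hcmp) hmu
        have hsE : lam * Real.exp (-η * ℓ q₁ 0) + mu * Real.exp (-η * ℓ q₁ 0)
            = Real.exp (-η * ℓ q₁ 0) := by rw [← add_mul, hsum, one_mul]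
        linarith
      · show (lam • x₁ + mu • x₂) 1 ≤ Real.exp (-η * ℓ q₁ 1)
        rw [hz1, hq1a]
        exact hVeq.le
  · -- neither: contradiction
    exfalso
    push_neg at h2a h2b
    obtain ⟨t₁, ht₁, hUt₁⟩ := h2a
    obtain ⟨t₂, ht₂, hVt₂⟩ := h2b
    have ht₂t₁ : t₂ < t₁ := by
      by_contra hle
      push_neg at hle
      rcases eq_or_lt_of_le hle with heq | hlt
      · rw [← heq] at hVt₂
        exact absurd (hcase t₁ ht₁ hUt₁) (not_lt.2 hVt₂)
      · have hm := hfmono t₁ ht₁ t₂ ht₂ hlt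
        exact absurd (hcase t₂ ht₂ (le_trans hUt₁ hm.le)) (not_lt.2 hVt₂)
    set C := {t | t ∈ Set.Icc t₂ t₁ ∧ V ≤ gf t} with hCdef
    have hsubC : Set.Icc t₂ t₁ ⊆ Set.Ioo (0:ℝ) 1 := fun x hx =>
      ⟨lt_of_lt_of_le ht₂.1 hx.1, lt_of_le_of_lt hx.2 ht₁.2⟩
    have hgfcont : ContinuousOn gf (Set.Icc t₂ t₁) := by
      rw [hgfdef]
      exact Real.continuous_exp.comp_continuousOn
        (continuousOn_const.mul (hadm.2.1.continuousOn.mono hsubC))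
    have hCeq : C = Set.Icc t₂ t₁ ∩ gf ⁻¹' (Set.Ici V) := by
      ext x
      simp only [hCdef, Set.mem_setOf_eq, Set.mem_inter_iff, Set.mem_preimage, Set.mem_Ici]
    have hCclosed : IsClosed C := by
      rw [hCeq]
      exact hgfcont.preimage_isClosed_of_isClosed isClosed_Icc isClosed_Ici
    have hCne : C.Nonempty := ⟨t₂, ⟨le_rfl, ht₂t₁.le⟩, hVt₂⟩
    have hCbdd : BddAbove C := ⟨t₁, fun x hx => hx.1.2⟩
    set τ := sSup C with hτdef
    have hτC : τ ∈ C := hCclosed.csSup_mem hCne hCbdd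
    have hτIoo : τ ∈ Set.Ioo (0:ℝ) 1 := hsubC hτC.1
    have hτV : V ≤ gf τ := hτC.2
    have hUτ : hf τ < U := by
      by_contra hle
      push_neg at hle
      exact absurd (hcase τ hτIoo hle) (not_lt.2 hτV)
    have hright : ∀ t ∈ Set.Ioo (0:ℝ) 1, τ < t → gf t < V := by
      intro t ht hτt
      by_contra hge
      push_neg at hge
      rcases le_or_gt t t₁ with hle | hgt
      · have htC : t ∈ C := ⟨⟨le_trans hτC.1.1 hτt.le, hle⟩, hge⟩
        have := le_csSup hCbdd htC
        rw [← hτdef] at this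
        linarith
      · have hm := hfmono t₁ ht₁ t ht hgt
        exact absurd (hcase t ht (le_trans hUt₁ hm.le)) (not_lt.2 hge)
    have hfcontAt : ContinuousAt hf τ := by
      rw [hhfdef]
      apply Real.continuous_exp.continuousAt.comp
      exact continuousAt_const.mul
        (hadm.1.continuousOn.continuousAt (isOpen_Ioo.mem_nhds hτIoo))
    have hev : ∀ᶠ t in nhds τ, hf t < U := by
      have : Set.Iio U ∈ nhds (hf τ) := Iio_mem_nhds hUτ
      exact hfcontAt.tendsto.eventually_mem this
    have hev2 : ∀ᶠ t in nhdsWithin τ (Set.Ioi τ), hf t < U :=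
      hev.filter_mono nhdsWithin_le_nhds
    have hev3 : ∀ᶠ t in nhdsWithin τ (Set.Ioi τ), t ∈ Set.Ioo τ 1 :=
      Ioo_mem_nhdsGT_of_mem ⟨le_rfl, hτIoo.2⟩
    obtain ⟨t, htlt, htmem⟩ := (hev2.and hev3).exists
    have hIoo : t ∈ Set.Ioo (0:ℝ) 1 := ⟨lt_trans hτIoo.1 htmem.1, htmem.2⟩
    have h1 := hright t hIoo htmem.1
    have h2 := hUV t hIoo htlt
    linarith

lemma curve_mem (η : ℝ) : ∀ s ∈ Set.Ioo (0:ℝ) 1,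
    Eproj2 η (ℓ ![s, 1-s]) ∈ Eproj2 η '' spr2 ℓ := by
  intro s hs
  refine ⟨ℓ ![s, 1-s], ⟨fun i => hrange _ (mem_simplex_pt (le_of_lt hs.1) (le_of_lt hs.2)) i,
    ![s, 1-s], mem_simplex_pt (le_of_lt hs.1) (le_of_lt hs.2), fun i => le_rfl⟩, rfl⟩

set_option maxHeartbeats 1000000 in
lemma bound_of_mix (η : ℝ) (hη0 : 0 < η) (hmix : IsMixable2 η ℓ) :
    ∀ t0 ∈ Set.Ioo (0:ℝ) 1, η * (t0 * (1 - t0) * wfn ℓ t0) ≤ 1 := by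
  intro t0 ht0
  by_contra hgt
  push_neg at hgt
  have ht1 : (0:ℝ) < 1 - t0 := by linarith [ht0.2]
  have hw := w_pos ℓ hrange hadm hprop t0 ht0
  set u : ℝ → ℝ := fun s => Real.exp (-η * tl ℓ 0 s) with hudef
  set v : ℝ → ℝ := fun s => Real.exp (-η * tl ℓ 1 s) with hvdef
  have hu0 : ∀ s, 0 < u s := fun s => Real.exp_pos _
  have hv0 : ∀ s, 0 < v s := fun s => Real.exp_pos _
  set F : ℝ → ℝ := fun s => t0 * u s / u t0 + (1 - t0) * v s / v t0 with hFdef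
  set Fd : ℝ → ℝ := fun s => t0 * (u s * (-η * deriv (tl ℓ 0) s)) / u t0
      + (1 - t0) * (v s * (-η * deriv (tl ℓ 1) s)) / v t0 with hFddef
  have hFt0 : F t0 = 1 := by
    show t0 * u t0 / u t0 + (1 - t0) * v t0 / v t0 = 1
    have h1 : u t0 ≠ 0 := ne_of_gt (hu0 t0)
    have h2 : v t0 ≠ 0 := ne_of_gt (hv0 t0)
    field_simp
    ring
  have hu' : ∀ s ∈ Set.Ioo (0:ℝ) 1, HasDerivAt u (u s * (-η * deriv (tl ℓ 0) s)) s :=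
    fun s hs => ((hasDeriv_f0 ℓ hrange hadm hprop s hs).const_mul (-η)).exp
  have hv' : ∀ s ∈ Set.Ioo (0:ℝ) 1, HasDerivAt v (v s * (-η * deriv (tl ℓ 1) s)) s :=
    fun s hs => ((hasDeriv_f1 ℓ hrange hadm hprop s hs).const_mul (-η)).exp
  have hFd : ∀ s ∈ Set.Ioo (0:ℝ) 1, HasDerivAt F (Fd s) s := by
    intro s hs
    exact (((hu' s hs).const_mul t0).div_const (u t0)).add
      (((hv' s hs).const_mul (1 - t0)).div_const (v t0))
  have hcancel : ∀ (c x y : ℝ), y ≠ 0 → c * (y * x) / y = c * x := by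
    intro c x y hy; field_simp
  have hFdt0 : Fd t0 = 0 := by
    show t0 * (u t0 * (-η * deriv (tl ℓ 0) t0)) / u t0
      + (1 - t0) * (v t0 * (-η * deriv (tl ℓ 1) t0)) / v t0 = 0
    have hst := stat ℓ hrange hadm hprop t0 ht0
    rw [hcancel t0 _ (u t0) (ne_of_gt (hu0 t0)), hcancel (1-t0) _ (v t0) (ne_of_gt (hv0 t0))]
    linear_combination (-η) * hst
  set Kval := η * wfn ℓ t0 * (η * (t0 * (1 - t0) * wfn ℓ t0) - 1) with hKdef
  have hKpos : 0 < Kval := mul_pos (mul_pos hη0 hw) (by linarith)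
  have hdd : HasDerivAt Fd Kval t0 := by
    have h1 : HasDerivAt (fun s => u s * (-η * deriv (tl ℓ 0) s))
        ((u t0 * (-η * deriv (tl ℓ 0) t0)) * (-η * deriv (tl ℓ 0) t0)
          + u t0 * (-η * deriv (deriv (tl ℓ 0)) t0)) t0 :=
      (hu' t0 ht0).mul ((hasDeriv_d0 ℓ hrange hadm hprop t0 ht0).const_mul (-η))
    have h2 : HasDerivAt (fun s => v s * (-η * deriv (tl ℓ 1) s))
        ((v t0 * (-η * deriv (tl ℓ 1) t0)) * (-η * deriv (tl ℓ 1) t0)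
          + v t0 * (-η * deriv (deriv (tl ℓ 1)) t0)) t0 :=
      (hv' t0 ht0).mul ((hasDeriv_d1 ℓ hrange hadm hprop t0 ht0).const_mul (-η))
    have h := ((h1.const_mul t0).div_const (u t0)).add ((h2.const_mul (1-t0)).div_const (v t0))
    refine h.congr_deriv (Eq.symm ?_)
    rw [hKdef, d0_eq ℓ hrange hadm hprop t0 ht0, d1_eq ℓ hrange hadm hprop t0 ht0,
      deriv_d0_eq ℓ hrange hadm hprop t0 ht0, deriv_d1_eq ℓ hrange hadm hprop t0 ht0]
    have h1' : u t0 ≠ 0 := ne_of_gt (hu0 t0)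
    have h2' : v t0 ≠ 0 := ne_of_gt (hv0 t0)
    field_simp
    ring
  -- extract sign of Fd near t0
  have hslope := hasDerivAt_iff_tendsto_slope.mp hdd
  have hev0 : ∀ᶠ s in nhdsWithin t0 {t0}ᶜ, 0 < slope Fd t0 s :=
    hslope.eventually (eventually_gt_nhds hKpos)
  have hevI : ∀ᶠ s in nhdsWithin t0 {t0}ᶜ, s ∈ Set.Ioo (0:ℝ) 1 :=
    (isOpen_Ioo.eventually_mem ht0).filter_mono nhdsWithin_le_nhds
  obtain ⟨δ, hδ0, hδ⟩ := Metric.mem_nhdsWithin_iff.mp (hev0.and hevI)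
  have hsign : ∀ s, |s - t0| < δ → s ≠ t0 → (0 < slope Fd t0 s ∧ s ∈ Set.Ioo (0:ℝ) 1) := by
    intro s hdist hne
    exact hδ ⟨by rwa [Metric.mem_ball, Real.dist_eq], hne⟩
  set dp := min (δ/2) ((1-t0)/2) with hdpdef
  set dm := min (δ/2) (t0/2) with hdmdef
  have hdp0 : 0 < dp := lt_min (by linarith) (by linarith)
  have hdm0 : 0 < dm := lt_min (by linarith) (by linarith [ht0.1])
  set sp := t0 + dp with hspdef
  set sm := t0 - dm with hsmdef
  have hspI : sp ∈ Set.Ioo (0:ℝ) 1 := by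
    constructor
    · rw [hspdef]; linarith [ht0.1]
    · rw [hspdef]; have := min_le_right (δ/2) ((1-t0)/2); linarith
  have hsmI : sm ∈ Set.Ioo (0:ℝ) 1 := by
    constructor
    · rw [hsmdef]; have := min_le_right (δ/2) (t0/2); linarith
    · rw [hsmdef]; linarith [ht0.2]
  have hltp : t0 < sp := by rw [hspdef]; linarith
  have hltm : sm < t0 := by rw [hsmdef]; linarith
  -- Fd is positive on (t0, sp), negative on (sm, t0)
  have hFdpos : ∀ c ∈ Set.Ioo t0 sp, 0 < Fd c := by
    intro c hc
    have hcI : c ∈ Set.Ioo (0:ℝ) 1 := ⟨lt_trans ht0.1 hc.1, lt_trans hc.2 hspI.2⟩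
    have hdist : |c - t0| < δ := by
      rw [abs_of_pos (by linarith [hc.1])]
      have h1 := min_le_left (δ/2) ((1-t0)/2)
      have h2 : c < t0 + dp := hc.2
      linarith
    have := (hsign c hdist (by linarith [hc.1] : c ≠ t0)).1
    rw [slope_def_field, hFdt0] at this
    have hden : 0 < c - t0 := by linarith [hc.1]
    rcases div_pos_iff.mp this with ⟨h3, _⟩ | ⟨_, h4⟩
    · linarith
    · linarith
  have hFdneg : ∀ c ∈ Set.Ioo sm t0, Fd c < 0 := by
    intro c hc
    have hcI : c ∈ Set.Ioo (0:ℝ) 1 := ⟨lt_trans hsmI.1 hc.1, lt_trans hc.2 ht0.2⟩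
    have hdist : |c - t0| < δ := by
      rw [abs_of_neg (by linarith [hc.2])]
      have h1 := min_le_left (δ/2) (t0/2)
      have h2 : t0 - dm < c := hc.1
      linarith
    have := (hsign c hdist (by linarith [hc.2] : c ≠ t0)).1
    rw [slope_def_field, hFdt0] at this
    have hden : c - t0 < 0 := by linarith [hc.2]
    rcases div_pos_iff.mp this with ⟨_, h3⟩ | ⟨h4, _⟩
    · linarith
    · linarith
  -- F exceeds 1 at sm and sp
  have hFcont : ∀ x ∈ Set.Icc sm sp, ContinuousAt F x := by
    intro x hx
    have hxI : x ∈ Set.Ioo (0:ℝ) 1 :=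
      ⟨lt_of_lt_of_le hsmI.1 hx.1, lt_of_le_of_lt hx.2 hspI.2⟩
    exact (hFd x hxI).continuousAt
  have hFp : 1 < F sp := by
    obtain ⟨c, hc, hceq⟩ := exists_hasDerivAt_eq_slope F Fd hltp
      (fun x hx => (hFcont x ⟨le_trans hltm.le hx.1, hx.2⟩).continuousWithinAt)
      (fun x hx => hFd x ⟨lt_trans ht0.1 hx.1, lt_trans hx.2 hspI.2⟩)
    have h1 := hFdpos c hc
    rw [hceq] at h1
    rw [hFt0] at h1
    rcases div_pos_iff.mp h1 with ⟨h3, _⟩ | ⟨_, h4⟩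
    · linarith
    · linarith
  have hFm : 1 < F sm := by
    obtain ⟨c, hc, hceq⟩ := exists_hasDerivAt_eq_slope F Fd hltm
      (fun x hx => (hFcont x ⟨hx.1, le_trans hx.2 hltp.le⟩).continuousWithinAt)
      (fun x hx => hFd x ⟨lt_trans hsmI.1 hx.1, lt_trans hx.2 ht0.2⟩)
    have h1 := hFdneg c hc
    rw [hceq] at h1
    rw [hFt0] at h1
    rcases div_neg_iff.mp h1 with ⟨h3, h4⟩ | ⟨h3, h4⟩
    · linarith
    · linarith
  -- the convex combination
  have hum : u sm < u t0 := by
    rw [hudef]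
    apply Real.exp_lt_exp.mpr
    have h := f0_anti ℓ hrange hadm hprop hsmI ht0 hltm
    nlinarith
  have hup2 : u t0 < u sp := by
    rw [hudef]
    apply Real.exp_lt_exp.mpr
    have h := f0_anti ℓ hrange hadm hprop ht0 hspI hltp
    nlinarith
  set mu := (u sp - u t0)/(u sp - u sm) with hmudef
  have hmu0 : 0 < mu := div_pos (by linarith) (by linarith)
  have hmu1 : mu < 1 := by
    rw [hmudef, div_lt_one (by linarith)]
    linarith
  have hz := hmix (curve_mem ℓ hrange hadm hprop η sm hsmI)
    (curve_mem ℓ hrange hadm hprop η sp hspI) hmu0.le (by linarith : (0:ℝ) ≤ 1 - mu)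
    (by ring)
  set z := mu • Eproj2 η (ℓ ![sm, 1-sm]) + (1-mu) • Eproj2 η (ℓ ![sp, 1-sp]) with hzdef
  have hz0e : z 0 = mu * u sm + (1-mu) * u sp := by
    show mu * Real.exp (-η * ℓ ![sm, 1-sm] 0) + (1-mu) * Real.exp (-η * ℓ ![sp, 1-sp] 0)
      = mu * u sm + (1-mu) * u sp
    rfl
  have hz1e : z 1 = mu * v sm + (1-mu) * v sp := by
    show mu * Real.exp (-η * ℓ ![sm, 1-sm] 1) + (1-mu) * Real.exp (-η * ℓ ![sp, 1-sp] 1)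
      = mu * v sm + (1-mu) * v sp
    rfl
  have hz0 : z 0 = u t0 := by
    rw [hz0e, hmudef]
    have hne : u sp - u sm ≠ 0 := by intro h; linarith
    field_simp
    ring
  have hcombo : 1 < mu * F sm + (1-mu) * F sp := by
    have i1 := (mul_lt_mul_iff_right₀ hmu0).mpr hFm
    have i2 := (mul_lt_mul_iff_right₀ (by linarith : (0:ℝ) < 1 - mu)).mpr hFp
    linarith
  have hz1gt : v t0 < z 1 := by
    have h3 : mu * u sm + (1-mu) * u sp = u t0 := by rw [← hz0e]; exact hz0
    have h1 : u t0 ≠ 0 := ne_of_gt (hu0 t0)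
    have h2 : v t0 ≠ 0 := ne_of_gt (hv0 t0)
    have hexp : mu * F sm + (1-mu) * F sp = t0 * (mu * u sm + (1-mu) * u sp) / u t0
        + (1-t0) * (mu * v sm + (1-mu) * v sp) / v t0 := by
      simp only [hFdef]
      field_simp
      ring
    rw [h3, mul_div_assoc, div_self h1, mul_one, ← hz1e] at hexp
    rw [hexp] at hcombo
    have h4 : 1 - t0 < (1-t0) * z 1 / v t0 := by linarith
    have h5 : (1-t0) * v t0 < (1-t0) * z 1 := (lt_div_iff₀ (hv0 t0)).mp h4
    exact (mul_lt_mul_iff_right₀ ht1).mp h5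
  -- analyze the witness
  obtain ⟨zpos, q, hq, hle⟩ := (mem_S_iff ℓ hrange hadm hprop η hη0 z).mp hz
  obtain ⟨hqe, hq0, hq1⟩ := simplex_eq hq
  have hzle0 := hle 0
  have hzle1 := hle 1
  rcases eq_or_lt_of_le hq0 with h0 | h0
  · -- q = ![0,1]
    have hqform : q = ![0,1] := by rw [hqe, ← h0]; norm_num
    rw [hqform] at hzle0
    have hm : t0/2 ∈ Set.Ioo (0:ℝ) 1 := ⟨by linarith [ht0.1], by linarith [ht0.1, ht0.2]⟩
    have hβ := f0_le_beta ℓ hrange hadm hprop (t0/2) hm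
    have hanti := f0_anti ℓ hrange hadm hprop hm ht0 (by linarith [ht0.1])
    have hlt : Real.exp (-η * ℓ ![0,1] 0) < u t0 := by
      rw [hudef]
      apply Real.exp_lt_exp.mpr
      nlinarith
    rw [hz0] at hzle0
    linarith
  rcases eq_or_lt_of_le hq1 with h1 | h1
  · -- q = ![1,0]
    have hqform : q = ![1,0] := by rw [hqe, h1]; norm_num
    rw [hqform] at hzle1
    have hm : (t0+1)/2 ∈ Set.Ioo (0:ℝ) 1 := ⟨by linarith [ht0.1], by linarith [ht0.2]⟩
    have hb := f1_le_b ℓ hrange hadm hprop ((t0+1)/2) hm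
    have hmono := f1_mono ℓ hrange hadm hprop ht0 hm (by linarith [ht0.2])
    have hlt : Real.exp (-η * ℓ ![1,0] 1) < v t0 := by
      rw [hvdef]
      apply Real.exp_lt_exp.mpr
      nlinarith
    linarith
  · -- interior witness
    have hr : q 0 ∈ Set.Ioo (0:ℝ) 1 := ⟨h0, h1⟩
    have he0 : ℓ q 0 = tl ℓ 0 (q 0) := by rw [tl, ← hqe]
    have he1 : ℓ q 1 = tl ℓ 1 (q 0) := by rw [tl, ← hqe]
    rw [he0] at hzle0
    rw [he1] at hzle1
    have hge : t0 ≤ q 0 := by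
      by_contra hltq
      push_neg at hltq
      have h := f0_anti ℓ hrange hadm hprop hr ht0 hltq
      have hult : Real.exp (-η * tl ℓ 0 (q 0)) < u t0 := by
        rw [hudef]
        apply Real.exp_lt_exp.mpr
        nlinarith
      rw [hz0] at hzle0
      linarith
    have hvle : Real.exp (-η * tl ℓ 1 (q 0)) ≤ v t0 := by
      rcases eq_or_lt_of_le hge with heq | hltq
      · rw [← heq]
      · rw [hvdef]
        apply Real.exp_le_exp.mpr
        have h := f1_mono ℓ hrange hadm hprop ht0 hr hltq
        nlinarith
    linarith

end Main

lemma exists_eventually_of_liminf_pos {l : Filter ℝ} (r : ℝ → ℝ)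
    (h : 0 < Filter.liminf (fun t => ((r t : ℝ) : EReal)) l) :
    ∃ ε : ℝ, 0 < ε ∧ ∀ᶠ t in l, ε < r t := by
  obtain ⟨c, hc0, hclim⟩ := exists_between h
  have hcbot : c ≠ ⊥ := by
    intro hc
    rw [hc] at hc0
    exact absurd hc0 (by simp)
  have hctop : c ≠ ⊤ := hclim.ne_top
  lift c to ℝ using ⟨hctop, hcbot⟩ with ε
  refine ⟨ε, by exact_mod_cast hc0, ?_⟩
  have hev := Filter.eventually_lt_of_lt_liminf hclim
  filter_upwards [hev] with t ht
  exact_mod_cast ht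

end Mix15

/-- An admissible proper binary loss is mixable iff the liminf of
`κ⁺_ℓ/κ⁺_log` is positive both as `t → 0⁺` and as `t → 1⁻`. -/
theorem mixable_iff_liminf_boundary (ℓ : (Fin 2 → ℝ) → Fin 2 → ℝ)
    (hrange : ∀ p ∈ simplex2, ∀ i, 0 ≤ ℓ p i)
    (hadm : IsAdmissible2 ℓ) (hprop : IsProper2 ℓ) :
    (∃ η > 0, IsMixable2 η ℓ) ↔
      (0 < Filter.liminf (fun t => ((kplus ℓ t / klog t : ℝ) : EReal))
          (nhdsWithin 0 (Set.Ioi 0)) ∧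
        0 < Filter.liminf (fun t => ((kplus ℓ t / klog t : ℝ) : EReal))
          (nhdsWithin 1 (Set.Iio 1))) := by
  constructor
  · rintro ⟨η, hη0, hmix⟩
    have hb := Mix15.bound_of_mix ℓ hrange hadm hprop η hη0 hmix
    have hpt : ∀ t ∈ Set.Ioo (0:ℝ) 1, (η : EReal) ≤ ((kplus ℓ t / klog t : ℝ) : EReal) := by
      intro t ht
      have hw := Mix15.w_pos ℓ hrange hadm hprop t ht
      have h1 : (0:ℝ) < 1 - t := by linarith [ht.2]
      have hX : 0 < t * (1 - t) * Mix15.wfn ℓ t := mul_pos (mul_pos ht.1 h1) hw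
      have : η ≤ kplus ℓ t / klog t := by
        rw [Mix15.ratio_eq ℓ hrange hadm hprop t ht, le_div_iff₀ hX]
        linarith [hb t ht]
      exact_mod_cast this
    constructor
    · have hev : ∀ᶠ t in nhdsWithin (0:ℝ) (Set.Ioi 0),
          (η : EReal) ≤ ((kplus ℓ t / klog t : ℝ) : EReal) := by
        filter_upwards [Ioo_mem_nhdsGT_of_mem (Set.mem_Ico.mpr ⟨le_rfl, one_pos⟩)] with t ht
        exact hpt t ht
      calc (0 : EReal) < (η : EReal) := by exact_mod_cast hη0
        _ ≤ _ := Filter.le_liminf_of_le (h := hev)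
    · have hev : ∀ᶠ t in nhdsWithin (1:ℝ) (Set.Iio 1),
          (η : EReal) ≤ ((kplus ℓ t / klog t : ℝ) : EReal) := by
        filter_upwards [Ioo_mem_nhdsLT_of_mem (Set.mem_Ioc.mpr ⟨one_pos, le_rfl⟩)] with t ht
        exact hpt t ht
      calc (0 : EReal) < (η : EReal) := by exact_mod_cast hη0
        _ ≤ _ := Filter.le_liminf_of_le (h := hev)
  · rintro ⟨h0, h1⟩
    obtain ⟨ε1, hε1, hev1⟩ := Mix15.exists_eventually_of_liminf_pos _ h0
    obtain ⟨ε2, hε2, hev2⟩ := Mix15.exists_eventually_of_liminf_pos _ h1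
    obtain ⟨δ1, hδ1, hball1⟩ := Metric.mem_nhdsWithin_iff.mp hev1
    obtain ⟨δ2, hδ2, hball2⟩ := Metric.mem_nhdsWithin_iff.mp hev2
    have hb1 : ∀ t ∈ Set.Ioo (0:ℝ) 1, t < δ1 →
        ε1 * (t * (1 - t) * Mix15.wfn ℓ t) < 1 := by
      intro t ht htδ
      have hmem : t ∈ Metric.ball (0:ℝ) δ1 ∩ Set.Ioi 0 := by
        constructor
        · rw [Metric.mem_ball, Real.dist_eq, sub_zero, abs_of_pos ht.1]
          exact htδ
        · exact ht.1
      have hr : ε1 < kplus ℓ t / klog t := hball1 hmem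
      rw [Mix15.ratio_eq ℓ hrange hadm hprop t ht] at hr
      have hw := Mix15.w_pos ℓ hrange hadm hprop t ht
      have h1' : (0:ℝ) < 1 - t := by linarith [ht.2]
      have hX : 0 < t * (1 - t) * Mix15.wfn ℓ t := mul_pos (mul_pos ht.1 h1') hw
      rw [lt_div_iff₀ hX] at hr
      linarith
    have hb2 : ∀ t ∈ Set.Ioo (0:ℝ) 1, 1 - t < δ2 →
        ε2 * (t * (1 - t) * Mix15.wfn ℓ t) < 1 := by
      intro t ht htδ
      have hmem : t ∈ Metric.ball (1:ℝ) δ2 ∩ Set.Iio 1 := by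
        constructor
        · rw [Metric.mem_ball, Real.dist_eq, abs_of_neg (by linarith [ht.2] : t - 1 < 0)]
          linarith
        · exact ht.2
      have hr : ε2 < kplus ℓ t / klog t := hball2 hmem
      rw [Mix15.ratio_eq ℓ hrange hadm hprop t ht] at hr
      have hw := Mix15.w_pos ℓ hrange hadm hprop t ht
      have h1' : (0:ℝ) < 1 - t := by linarith [ht.2]
      have hX : 0 < t * (1 - t) * Mix15.wfn ℓ t := mul_pos (mul_pos ht.1 h1') hw
      rw [lt_div_iff₀ hX] at hr
      linarith
    set lo := min (δ1/2) (1/4 : ℝ) with hlodef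
    set hi := max (1 - δ2/2) (3/4 : ℝ) with hhidef
    have hlo0 : 0 < lo := lt_min (by linarith) (by norm_num)
    have hlo4 : lo ≤ 1/4 := min_le_right _ _
    have hhi4 : (3/4 : ℝ) ≤ hi := le_max_right _ _
    have hhi1 : hi < 1 := max_lt (by linarith) (by norm_num)
    have hKsub : Set.Icc lo hi ⊆ Set.Ioo (0:ℝ) 1 := fun x hx =>
      ⟨lt_of_lt_of_le hlo0 hx.1, lt_of_le_of_lt hx.2 hhi1⟩
    have hwcont : ContinuousOn (Mix15.wfn ℓ) (Set.Icc lo hi) := by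
      apply ContinuousOn.div
      · exact (Mix15.contDiffOn_d1 ℓ hrange hadm hprop).continuousOn.mono hKsub
      · exact continuousOn_id
      · exact fun x hx => ne_of_gt (hKsub hx).1
    have hφcont : ContinuousOn (fun t => t * (1 - t) * Mix15.wfn ℓ t) (Set.Icc lo hi) :=
      (continuousOn_id.mul (continuousOn_const.sub continuousOn_id)).mul hwcont
    have hKne : (Set.Icc lo hi).Nonempty := ⟨lo, le_rfl, by linarith⟩
    obtain ⟨m, hmK, hmax⟩ := isCompact_Icc.exists_isMaxOn hKne hφcont
    have hmI : m ∈ Set.Ioo (0:ℝ) 1 := hKsub hmK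
    have hφm : 0 < m * (1 - m) * Mix15.wfn ℓ m :=
      mul_pos (mul_pos hmI.1 (by linarith [hmI.2]))
        (Mix15.w_pos ℓ hrange hadm hprop m hmI)
    set η := min ε1 (min ε2 (1 / (m * (1 - m) * Mix15.wfn ℓ m))) with hηdef
    have hη0 : 0 < η := lt_min hε1 (lt_min hε2 (by positivity))
    refine ⟨η, hη0, Mix15.mix_of_bound ℓ hrange hadm hprop η hη0 ?_⟩
    intro t ht
    have hw := Mix15.w_pos ℓ hrange hadm hprop t ht
    have h1' : (0:ℝ) < 1 - t := by linarith [ht.2]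
    have hX : 0 < t * (1 - t) * Mix15.wfn ℓ t := mul_pos (mul_pos ht.1 h1') hw
    by_cases hK : t ∈ Set.Icc lo hi
    · have hle := hmax hK
      have hη3 : η ≤ 1 / (m * (1 - m) * Mix15.wfn ℓ m) :=
        le_trans (min_le_right _ _) (min_le_right _ _)
      calc η * (t * (1 - t) * Mix15.wfn ℓ t)
          ≤ (1 / (m * (1 - m) * Mix15.wfn ℓ m)) * (t * (1 - t) * Mix15.wfn ℓ t) :=
            mul_le_mul_of_nonneg_right hη3 hX.le
        _ ≤ (1 / (m * (1 - m) * Mix15.wfn ℓ m)) * (m * (1 - m) * Mix15.wfn ℓ m) :=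
            mul_le_mul_of_nonneg_left hle (by positivity)
        _ = 1 := one_div_mul_cancel hφm.ne'
    · rw [Set.mem_Icc] at hK
      push_neg at hK
      rcases lt_or_ge t lo with hlt | hge
      · have hδ : t < δ1 := by
          have := min_le_left (δ1/2) (1/4 : ℝ)
          have h2 : lo ≤ δ1/2 := this
          linarith
        have := hb1 t ht hδ
        have hη1 : η ≤ ε1 := min_le_left _ _
        calc η * (t * (1 - t) * Mix15.wfn ℓ t)
            ≤ ε1 * (t * (1 - t) * Mix15.wfn ℓ t) := mul_le_mul_of_nonneg_right hη1 hX.le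
          _ ≤ 1 := this.le
      · have hgt : hi < t := hK hge
        have hδ : 1 - t < δ2 := by
          have h2 : 1 - δ2/2 ≤ hi := le_max_left _ _
          linarith
        have := hb2 t ht hδ
        have hη2 : η ≤ ε2 := le_trans (min_le_right _ _) (min_le_left _ _)
        calc η * (t * (1 - t) * Mix15.wfn ℓ t)
            ≤ ε2 * (t * (1 - t) * Mix15.wfn ℓ t) := mul_le_mul_of_nonneg_right hη2 hX.le
          _ ≤ 1 := this.le
end
end

section
/- Let ϱ : Δ² → [0,∞)² be an admissible (ϱ ∈ 𝓛) strictly proper binary loss function with local expression ϱ̃(t) = ϱ(t, 1−t). Then for every t ∈ (0,1), ϱ̃₂'(t) − ϱ̃₁'(t) ≠ 0 and t = ϱ̃₂'(t)/(ϱ̃₂'(t) − ϱ̃₁'(t)). Consequently, if ψ : (0,1) → 𝒱 ⊆ ℝ is a bijective link with differentiable inverse, the composite loss ϱ̂ = ϱ̃ ∘ ψ⁻¹ can be strictly proper (i.e. arise from a strictly proper ϱ) only if ψ⁻¹(v) = ϱ̃₂'(ψ⁻¹(v))/(ϱ̃₂'(ψ⁻¹(v)) − ϱ̃₁'(ψ⁻¹(v)))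 for all v ∈ 𝒱. -/
open Real Set Filter

noncomputable section

/-- For an admissible strictly proper binary loss `ϱ`,
`ϱ̃₂'(t) − ϱ̃₁'(t) ≠ 0` and `t = ϱ̃₂'(t)/(ϱ̃₂'(t) − ϱ̃₁'(t))` on (0,1); consequently, for
any bijective link `ψ : (0,1) → 𝒱` with differentiable inverse, the inverse link
satisfies `ψ⁻¹(v) = ϱ̃₂'(ψ⁻¹(v))/(ϱ̃₂'(ψ⁻¹(v)) − ϱ̃₁'(ψ⁻¹(v)))` on `𝒱`. -/
theorem strictlyProper_link_condition (ϱ : (Fin 2 → ℝ) → Fin 2 → ℝ)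
    (hrange : ∀ p ∈ simplex2, ∀ i, 0 ≤ ϱ p i)
    (hadm : IsAdmissible2 ϱ) (hsp : IsStrictlyProper2 ϱ) :
    (∀ t ∈ Set.Ioo (0 : ℝ) 1,
        deriv (tl ϱ 1) t - deriv (tl ϱ 0) t ≠ 0 ∧
        t = deriv (tl ϱ 1) t / (deriv (tl ϱ 1) t - deriv (tl ϱ 0) t)) ∧
      ∀ (V : Set ℝ) (ψ ψinv : ℝ → ℝ),
        Set.BijOn ψ (Set.Ioo 0 1) V →
        (∀ v ∈ V, ψinv v ∈ Set.Ioo (0 : ℝ) 1 ∧ ψ (ψinv v) = v) →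
        DifferentiableOn ℝ ψinv V →
        ∀ v ∈ V, ψinv v =
          deriv (tl ϱ 1) (ψinv v) /
            (deriv (tl ϱ 1) (ψinv v) - deriv (tl ϱ 0) (ψinv v)) := by
  have main : ∀ t ∈ Set.Ioo (0 : ℝ) 1,
      deriv (tl ϱ 1) t - deriv (tl ϱ 0) t ≠ 0 ∧
      t = deriv (tl ϱ 1) t / (deriv (tl ϱ 1) t - deriv (tl ϱ 0) t) := by
    intro t ht
    obtain ⟨ht0, ht1⟩ := ht
    set d0 := deriv (tl ϱ 0) t with hd0def
    set d1 := deriv (tl ϱ 1) t with hd1def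
    have hsign : d0 * d1 < 0 := hadm.2.2 t ⟨ht0, ht1⟩
    have hne : d1 - d0 ≠ 0 := by
      intro h
      have : d0 = d1 := by linarith
      rw [this] at hsign
      nlinarith
    -- membership of parametrized points in the simplex
    have hmem : ∀ s : ℝ, s ∈ Set.Icc (0:ℝ) 1 → (![s, 1 - s]) ∈ simplex2 := by
      intro s hs
      constructor
      · intro i
        fin_cases i <;> simp [hs.1, hs.2] <;> linarith [hs.1, hs.2]
      · simp [Fin.sum_univ_two]
    have htmem : (![t, 1 - t]) ∈ simplex2 := hmem t ⟨le_of_lt ht0, le_of_lt ht1⟩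
    -- the function to minimize
    set g : ℝ → ℝ := fun s => t * tl ϱ 0 s + (1 - t) * tl ϱ 1 s with hg
    have hmin : ∀ s ∈ Set.Icc (0:ℝ) 1, g t ≤ g s := by
      intro s hs
      have := hsp.1 (![t, 1 - t]) htmem (![s, 1 - s]) (hmem s hs)
      simp only [Fin.sum_univ_two] at this
      simp only [hg, tl]
      have h0 : (![t, 1 - t]) 0 = t := rfl
      have h1 : (![t, 1 - t]) 1 = 1 - t := rfl
      rw [h0, h1] at this
      linarith
    have hloc : IsLocalMin g t := by
      have : Set.Icc (0:ℝ) 1 ∈ nhds t :=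
        Filter.mem_of_superset (isOpen_Ioo.mem_nhds (⟨ht0, ht1⟩ : t ∈ Set.Ioo 0 1))
          Set.Ioo_subset_Icc_self
      exact Filter.eventually_of_mem this (fun s hs => hmin s hs)
    have hda0 : DifferentiableAt ℝ (tl ϱ 0) t :=
      (hadm.1.contDiffAt (isOpen_Ioo.mem_nhds ⟨ht0, ht1⟩)).differentiableAt (by norm_num)
    have hda1 : DifferentiableAt ℝ (tl ϱ 1) t :=
      (hadm.2.1.contDiffAt (isOpen_Ioo.mem_nhds ⟨ht0, ht1⟩)).differentiableAt (by norm_num)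
    have hgd : HasDerivAt g (t * d0 + (1 - t) * d1) t :=
      ((hda0.hasDerivAt.const_mul t).add (hda1.hasDerivAt.const_mul (1 - t)))
    have hzero : t * d0 + (1 - t) * d1 = 0 := by
      have := hloc.deriv_eq_zero
      rwa [hgd.deriv] at this
    refine ⟨hne, ?_⟩
    field_simp
    linarith
  refine ⟨main, ?_⟩
  intro V ψ ψinv hbij hinv hdiff v hv
  exact (main (ψinv v) (hinv v hv).1).2
end
end
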